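/- arXiv:2107.12505 — 9 statements merged into one kernel-verified Lean document; each statement's English description precedes it below -/
import Mathlib

section
/- Let n ≥ 2 and let A(x) = [a_{k,j}(x)] be a symmetric n×n matrix-valued function on a set X that is positive definite for every x ∈ X; write A(x) in block form with top-left entry a_{1,1}(x), first-column tail b(x) ∈ ℝ^{n−1}, and lower-right (n−1)×(n−1) block D(x). If A is comparable to its associated diagonal matrix-valued function A_diag, then there exists 0 < γ < 1 such that for all x ∈ X: b(x)ᵀ D(x)^{−1} b(x) ≤ γ² a_{1,1}(x), and moreover |a_{k,j}(x)| ≤ γ √(a_{k,k}(x) a_{j,j}(x)) for all 1 ≤ k < j ≤ n. -/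
open Matrix

private lemma quad_cons {n : ℕ} (M : Matrix (Fin (n+1)) (Fin (n+1)) ℝ) (c : ℝ) (v : Fin n → ℝ) :
    (Fin.cons c v) ⬝ᵥ M *ᵥ (Fin.cons c v) =
      c * M 0 0 * c + c * (∑ j, M 0 j.succ * v j) + (∑ i, v i * (M i.succ 0 * c)) +
      v ⬝ᵥ (M.submatrix Fin.succ Fin.succ) *ᵥ v := by
  simp only [dotProduct, mulVec, Fin.sum_univ_succ, Fin.cons_zero, Fin.cons_succ,
    submatrix_apply, mul_add, Finset.mul_sum, Finset.sum_add_distrib]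
  ring

private lemma quad_pair {m : Type*} [Fintype m] [DecidableEq m] (M : Matrix m m ℝ)
    (k j : m) (h : k ≠ j) (t u : ℝ) :
    (Pi.single k t + Pi.single j u) ⬝ᵥ M *ᵥ (Pi.single k t + Pi.single j u)
      = t * M k k * t + t * M k j * u + u * M j k * t + u * M j j * u := by
  simp [add_dotProduct, dotProduct_add, mulVec_add, mulVec_single, dotProduct_single,
    single_dotProduct, Pi.single_apply, h, h.symm]
  ring

private lemma quad_pair_diag {m : Type*} [Fintype m] [DecidableEq m] (d : m → ℝ)
    (k j : m) (h : k ≠ j) (t u : ℝ) :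
    (Pi.single k t + Pi.single j u) ⬝ᵥ (diagonal d) *ᵥ (Pi.single k t + Pi.single j u)
      = t * d k * t + u * d j * u := by
  simp [add_dotProduct, dotProduct_add, mulVec_add, mulVec_single, dotProduct_single,
    single_dotProduct, Pi.single_apply, h, h.symm, diagonal_apply, mulVec_diagonal]
  ring

private lemma quad_cons_diag {n : ℕ} (d : Fin (n+1) → ℝ) (c : ℝ) (v : Fin n → ℝ) :
    (Fin.cons c v) ⬝ᵥ (diagonal d) *ᵥ (Fin.cons c v)
      = c * d 0 * c + ∑ i, v i * d i.succ * v i := by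
  simp [dotProduct, mulVec_diagonal, Fin.sum_univ_succ]
  ring_nf

theorem stmt_1 {n : ℕ} (hn : 1 ≤ n) {X : Type*}
    (A : X → Matrix (Fin (n + 1)) (Fin (n + 1)) ℝ)
    (hsym : ∀ x, (A x).IsSymm)
    (hpd : ∀ x, (A x).PosDef)
    (hcomp : ∃ β α : ℝ, 0 < β ∧ β ≤ α ∧ ∀ (x : X) (ξ : Fin (n + 1) → ℝ),
        β * (ξ ⬝ᵥ (Matrix.diagonal (fun k => A x k k)) *ᵥ ξ) ≤ ξ ⬝ᵥ (A x) *ᵥ ξ ∧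
        ξ ⬝ᵥ (A x) *ᵥ ξ ≤ α * (ξ ⬝ᵥ (Matrix.diagonal (fun k => A x k k)) *ᵥ ξ)) :
    ∃ γ : ℝ, 0 < γ ∧ γ < 1 ∧ ∀ x : X,
      ((fun k : Fin n => A x k.succ 0) ⬝ᵥ
          ((A x).submatrix Fin.succ Fin.succ)⁻¹ *ᵥ (fun k : Fin n => A x k.succ 0))
        ≤ γ ^ 2 * A x 0 0 ∧
      ∀ k j : Fin (n + 1), k < j → |A x k j| ≤ γ * Real.sqrt (A x k k * A x j j) := by
  obtain ⟨β, α, hβ, hβα, h⟩ := hcomp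
  set b' : ℝ := min β 1 with hb'def
  have hb'0 : 0 < b' := lt_min hβ one_pos
  have hb'1 : b' ≤ 1 := min_le_right _ _
  set γ : ℝ := Real.sqrt (1 - b' / 2) with hγdef
  have hpos : (0:ℝ) < 1 - b' / 2 := by linarith
  have hγ0 : 0 < γ := Real.sqrt_pos.mpr hpos
  have hγsq : γ ^ 2 = 1 - b' / 2 := Real.sq_sqrt hpos.le
  have hγ1 : γ < 1 := by
    nlinarith [hγsq, hγ0]
  have hγ2 : 1 - b' ≤ γ ^ 2 := by rw [hγsq]; linarith
  have hγ3 : 1 - b' ≤ γ := by nlinarith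
  -- diagonal entries are positive
  have hdiag : ∀ x (i : Fin (n+1)), 0 < A x i i := by
    intro x i
    have hne : (Pi.single i 1 : Fin (n+1) → ℝ) ≠ 0 := by
      intro hc
      simpa using congrFun hc i
    have := (hpd x).dotProduct_mulVec_pos hne
    simpa [single_dotProduct, mulVec_single] using this
  -- comparison with b'
  have hcβ : ∀ x (ξ : Fin (n+1) → ℝ),
      b' * (ξ ⬝ᵥ (Matrix.diagonal (fun k => A x k k)) *ᵥ ξ) ≤ ξ ⬝ᵥ (A x) *ᵥ ξ := by
    intro x ξ
    have hq : 0 ≤ ξ ⬝ᵥ (Matrix.diagonal (fun k => A x k k)) *ᵥ ξ := by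
      have := ((Matrix.PosDef.diagonal (fun i => hdiag x i)).posSemidef).dotProduct_mulVec_nonneg ξ
      simpa using this
    calc b' * (ξ ⬝ᵥ (Matrix.diagonal (fun k => A x k k)) *ᵥ ξ)
        ≤ β * (ξ ⬝ᵥ (Matrix.diagonal (fun k => A x k k)) *ᵥ ξ) :=
          mul_le_mul_of_nonneg_right (min_le_left _ _) hq
      _ ≤ _ := (h x ξ).1
  refine ⟨γ, hγ0, hγ1, fun x => ?_⟩
  constructor
  · -- Schur complement bound
    set Dm := (A x).submatrix Fin.succ Fin.succ with hDm
    set bv : Fin n → ℝ := fun k => A x k.succ 0 with hbv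
    have hDpd : Dm.PosDef := by
      refine Matrix.PosDef.of_dotProduct_mulVec_pos ?_ ?_
      · show Dmᴴ = Dm
        ext i j
        simp only [conjTranspose_apply, submatrix_apply, star_trivial, hDm]
        exact (hsym x).apply _ _
      · intro v hv
        have hξ : (Fin.cons 0 v : Fin (n+1) → ℝ) ≠ 0 := by
          intro hc
          apply hv
          funext i
          simpa [Fin.cons_succ] using congrFun hc i.succ
        have h0 := (hpd x).dotProduct_mulVec_pos hξ
        rw [star_trivial, quad_cons] at h0
        simpa using h0
    have hDdet : IsUnit Dm.det := isUnit_iff_isUnit_det _ |>.1 hDpd.isUnit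
    set w : Fin n → ℝ := Dm⁻¹ *ᵥ bv with hw
    have hDw : Dm *ᵥ w = bv := by
      rw [hw, mulVec_mulVec, mul_nonsing_inv _ hDdet, one_mulVec]
    have hsym0 : ∀ j : Fin n, A x 0 j.succ = bv j := fun j => ((hsym x).apply _ _).symm
    -- quadratic form at ξ = cons 1 (-w)
    have hquadA : (Fin.cons 1 (-w) : Fin (n+1) → ℝ) ⬝ᵥ (A x) *ᵥ (Fin.cons 1 (-w))
        = A x 0 0 - bv ⬝ᵥ w := by
      rw [quad_cons]
      have e1 : (∑ j, A x 0 j.succ * (-w) j) = -(bv ⬝ᵥ w) := by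
        simp only [Pi.neg_apply, mul_neg, Finset.sum_neg_distrib, hsym0]
        rfl
      have e2 : (∑ i, (-w) i * (A x i.succ 0 * 1)) = -(w ⬝ᵥ bv) := by
        simp only [Pi.neg_apply, mul_one, neg_mul, Finset.sum_neg_distrib]
        rfl
      have e3 : (-w) ⬝ᵥ ((A x).submatrix Fin.succ Fin.succ) *ᵥ (-w) = w ⬝ᵥ bv := by
        rw [mulVec_neg, neg_dotProduct, dotProduct_neg, neg_neg, ← hDm, hDw]
      rw [e1, e2, e3, dotProduct_comm w bv]
      ring
    have hquadD : A x 0 0 ≤ (Fin.cons 1 (-w) : Fin (n+1) → ℝ) ⬝ᵥ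
        (Matrix.diagonal (fun k => A x k k)) *ᵥ (Fin.cons 1 (-w)) := by
      rw [quad_cons_diag]
      have : 0 ≤ ∑ i, (-w) i * A x i.succ i.succ * (-w) i := by
        apply Finset.sum_nonneg
        intro i _
        simp only [Pi.neg_apply]
        have h1 : -w i * A x i.succ i.succ * -w i = A x i.succ i.succ * w i ^ 2 := by ring
        rw [h1]
        exact mul_nonneg (hdiag x i.succ).le (sq_nonneg _)
      simp only [one_mul, mul_one]
      linarith
    have hc := hcβ x (Fin.cons 1 (-w))
    have hA00 := hdiag x 0
    have hfinal : bv ⬝ᵥ w ≤ (1 - b') * A x 0 0 := by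
      nlinarith
    calc bv ⬝ᵥ Dm⁻¹ *ᵥ bv = bv ⬝ᵥ w := rfl
      _ ≤ (1 - b') * A x 0 0 := hfinal
      _ ≤ γ ^ 2 * A x 0 0 := mul_le_mul_of_nonneg_right hγ2 hA00.le
  · -- off-diagonal bound
    intro k j hkj
    have hne : k ≠ j := hkj.ne
    have hMjk : A x j k = A x k j := (hsym x).apply _ _
    have key : ∀ t u : ℝ, b' * (t * A x k k * t + u * A x j j * u)
        ≤ t * A x k k * t + 2 * (t * u) * A x k j + u * A x j j * u := by
      intro t u
      have h1 := hcβ x (Pi.single k t + Pi.single j u)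
      rw [quad_pair_diag _ k j hne, quad_pair _ k j hne, hMjk] at h1
      linarith
    set t := Real.sqrt (A x j j) with ht
    set u := Real.sqrt (A x k k) with hu
    have htt : t * t = A x j j := Real.mul_self_sqrt (hdiag x j).le
    have huu : u * u = A x k k := Real.mul_self_sqrt (hdiag x k).le
    set P := A x k k * A x j j with hP
    have hP0 : 0 < P := mul_pos (hdiag x k) (hdiag x j)
    set s := Real.sqrt P with hs
    have hs0 : 0 < s := Real.sqrt_pos.mpr hP0
    have hss : s * s = P := Real.mul_self_sqrt hP0.le
    have hstu : t * u = s := by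
      rw [ht, hu, hs, hP, mul_comm (A x k k), Real.sqrt_mul (hdiag x j).le]
    have e1 : t * A x k k * t = P := by
      calc t * A x k k * t = A x k k * (t * t) := by ring
        _ = P := by rw [htt, hP]
    have e2 : u * A x j j * u = P := by
      calc u * A x j j * u = (u * u) * A x j j := by ring
        _ = P := by rw [huu, hP]
    clear_value t u P s
    have k1 := key t u
    have k2 := key t (-u)
    rw [e1, e2, hstu] at k1
    have e2' : (-u) * A x j j * (-u) = P := by rw [← e2]; ring
    have hstu' : t * (-u) = -s := by rw [← hstu]; ring
    rw [e1, e2', hstu'] at k2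
    -- k1 : b' * (P + P) ≤ P + 2 * s * A x k j + P
    -- k2 : b' * (P + P) ≤ P + 2 * (-s) * A x k j + P
    clear key h hcβ hpd hsym hdiag htt huu e1 e2 e2' hstu hstu'
    have habs : |A x k j| * s ≤ (1 - b') * P := by
      rcases abs_cases (A x k j) with ⟨he, _⟩ | ⟨he, _⟩ <;> rw [he] <;> nlinarith [k1, k2]
    have hgoal : |A x k j| ≤ γ * s := by
      have h2 : |A x k j| * s ≤ (γ * s) * s := by
        calc |A x k j| * s ≤ (1 - b') * P := habs
          _ = ((1 - b') * s) * s := by rw [← hss]; ring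
          _ ≤ (γ * s) * s := by nlinarith
      exact le_of_mul_le_mul_right h2 hs0
    simpa [hs, hP] using hgoal
end

section
/- Let A(x) = [a_{i,j}(x)] be an n×n positive semidefinite matrix-valued function on ℝ^M of class C² that is comparable to a diagonal matrix-valued function with nonnegative diagonal entries. Then A is subordinate if and only if there is a constant C such that |∇a_{i,j}(x)|² ≤ C·min{a_{i,i}(x), a_{j,j}(x)} for all x ∈ ℝ^M and all 1 ≤ i, j ≤ n. In particular, if a_{i,i}(x) ≈ λ(x) (with uniform constants) for all 1 ≤ i ≤ n, then A is subordinate if and only if |∇a_{i,j}(x)|² ≤ C·λ(x) for all x and all i, j. -/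
open Matrix

noncomputable section

abbrev E (M : ℕ) := EuclideanSpace ℝ (Fin M)

noncomputable def pdM {M n : ℕ} (k : Fin M) (A : E M → Matrix (Fin n) (Fin n) ℝ)
    (x : E M) : Matrix (Fin n) (Fin n) ℝ :=
  Matrix.of fun i j => fderiv ℝ (fun y => A y i j) x (EuclideanSpace.single k 1)

def Subordinate {M n : ℕ} (A : E M → Matrix (Fin n) (Fin n) ℝ) : Prop :=
  ∃ Γ : ℝ, 0 < Γ ∧ ∀ (x : E M) (ξ : Fin n → ℝ) (k : Fin M),
    ∑ i, ((pdM k A x) *ᵥ ξ) i ^ 2 ≤ Γ ^ 2 * (ξ ⬝ᵥ (A x) *ᵥ ξ)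

lemma norm_sq_eq_sum {M : ℕ} (L : E M →L[ℝ] ℝ) :
    ‖L‖ ^ 2 = ∑ k, (L (EuclideanSpace.single k 1)) ^ 2 := by
  set v := (InnerProductSpace.toDual ℝ (E M)).symm L with hv
  have hLk : ∀ k, L (EuclideanSpace.single k 1) = v k := by
    intro k
    rw [← InnerProductSpace.toDual_symm_apply (𝕜 := ℝ), ← hv]
    rw [EuclideanSpace.inner_single_right (𝕜 := ℝ) k 1 v]
    simp
  have hnorm : ‖L‖ = ‖v‖ := ((InnerProductSpace.toDual ℝ (E M)).symm.norm_map L).symm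
  rw [hnorm, EuclideanSpace.norm_eq, Real.sq_sqrt (by positivity)]
  simp [hLk, sq_abs]

lemma fwd {M n : ℕ} (A : E M → Matrix (Fin n) (Fin n) ℝ)
    (hsym : ∀ x, (A x).IsSymm) (h : Subordinate A) :
    ∃ C : ℝ, 0 ≤ C ∧ ∀ (x : E M) (i j : Fin n),
      ‖fderiv ℝ (fun y => A y i j) x‖ ^ 2 ≤ C * min (A x i i) (A x j j) := by
  obtain ⟨Γ, hΓ, hsub⟩ := h
  refine ⟨(M : ℝ) * Γ ^ 2, by positivity, ?_⟩
  intro x i j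
  have key : ∀ (i j : Fin n) (k : Fin M),
      (fderiv ℝ (fun y => A y i j) x (EuclideanSpace.single k 1)) ^ 2 ≤ Γ ^ 2 * A x j j := by
    intro i j k
    have h1 := hsub x (Pi.single j 1) k
    have h2 : (pdM k A x i j) ^ 2 ≤ ∑ i', ((pdM k A x) *ᵥ Pi.single j 1) i' ^ 2 := by
      have := Finset.single_le_sum
        (f := fun i' => ((pdM k A x) *ᵥ Pi.single j 1) i' ^ 2)
        (fun _ _ => sq_nonneg _) (Finset.mem_univ i)
      simpa [mulVec_single] using this
    have h3 : Pi.single j 1 ⬝ᵥ (A x) *ᵥ Pi.single j 1 = A x j j := by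
      simp [single_dotProduct, mulVec_single]
    have : (pdM k A x i j) ^ 2 ≤ Γ ^ 2 * A x j j := le_trans h2 (by rw [← h3]; exact h1)
    simpa [pdM] using this
  have hswap : (fun y => A y i j) = (fun y => A y j i) := by
    funext y; exact ((hsym y).apply i j).symm
  rw [norm_sq_eq_sum]
  have hb : ∀ k : Fin M, (fderiv ℝ (fun y => A y i j) x (EuclideanSpace.single k 1)) ^ 2
      ≤ Γ ^ 2 * min (A x i i) (A x j j) := by
    intro k
    rcases min_cases (A x i i) (A x j j) with ⟨hm, _⟩ | ⟨hm, _⟩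
    · rw [hm, hswap]; exact key j i k
    · rw [hm]; exact key i j k
  calc ∑ k, (fderiv ℝ (fun y => A y i j) x (EuclideanSpace.single k 1)) ^ 2
      ≤ ∑ _k : Fin M, Γ ^ 2 * min (A x i i) (A x j j) :=
        Finset.sum_le_sum (fun k _ => hb k)
    _ = (M : ℝ) * Γ ^ 2 * min (A x i i) (A x j j) := by
        simp [Finset.sum_const]; ring

lemma bwd {M n : ℕ} (A : E M → Matrix (Fin n) (Fin n) ℝ)
    (hpsd : ∀ x, (A x).PosSemidef)
    (d : E M → Fin n → ℝ)
    (β α : ℝ) (hβ : 0 < β) (hβα : β ≤ α)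
    (hcomp : ∀ (x : E M) (ξ : Fin n → ℝ),
        β * (ξ ⬝ᵥ (Matrix.diagonal (d x)) *ᵥ ξ) ≤ ξ ⬝ᵥ (A x) *ᵥ ξ ∧
        ξ ⬝ᵥ (A x) *ᵥ ξ ≤ α * (ξ ⬝ᵥ (Matrix.diagonal (d x)) *ᵥ ξ))
    (C : ℝ) (hC : 0 ≤ C)
    (h : ∀ (x : E M) (i j : Fin n),
      ‖fderiv ℝ (fun y => A y i j) x‖ ^ 2 ≤ C * min (A x i i) (A x j j)) :
    Subordinate A := by
  have hα : 0 ≤ α := le_trans hβ.le hβα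
  refine ⟨Real.sqrt ((n : ℝ) ^ 2 * C * α / β + 1),
    Real.sqrt_pos.mpr (by positivity), ?_⟩
  intro x ξ k
  have hAx : 0 ≤ ξ ⬝ᵥ (A x) *ᵥ ξ := by
    have := (hpsd x).dotProduct_mulVec_nonneg ξ; simpa using this
  have hdiag : ξ ⬝ᵥ (Matrix.diagonal (d x)) *ᵥ ξ = ∑ j, d x j * ξ j ^ 2 := by
    simp only [dotProduct, mulVec_diagonal]
    exact Finset.sum_congr rfl (fun j _ => by ring)
  have hdd : ξ ⬝ᵥ (Matrix.diagonal (d x)) *ᵥ ξ ≤ (ξ ⬝ᵥ (A x) *ᵥ ξ) / β := by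
    rw [le_div_iff₀ hβ]
    have := (hcomp x ξ).1
    linarith
  have hentry : ∀ i j, (pdM k A x i j) ^ 2 ≤ C * A x j j := by
    intro i j
    have h1 : |pdM k A x i j| ≤ ‖fderiv ℝ (fun y => A y i j) x‖ := by
      have := (fderiv ℝ (fun y => A y i j) x).le_opNorm (EuclideanSpace.single k 1)
      simpa [pdM, Real.norm_eq_abs] using this
    calc (pdM k A x i j) ^ 2 = |pdM k A x i j| ^ 2 := (sq_abs _).symm
      _ ≤ ‖fderiv ℝ (fun y => A y i j) x‖ ^ 2 :=
          pow_le_pow_left₀ (abs_nonneg _) h1 2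
      _ ≤ C * min (A x i i) (A x j j) := h x i j
      _ ≤ C * A x j j := mul_le_mul_of_nonneg_left (min_le_right _ _) hC
  have hdiagle : ∀ j, A x j j ≤ α * d x j := by
    intro j
    have := (hcomp x (Pi.single j 1)).2
    simpa [single_dotProduct, mulVec_single, mulVec_diagonal] using this
  calc ∑ i, ((pdM k A x) *ᵥ ξ) i ^ 2
      ≤ ∑ _i : Fin n, (n : ℝ) * ∑ j, (pdM k A x _i j * ξ j) ^ 2 := by
        apply Finset.sum_le_sum; intro i _
        have := sq_sum_le_card_mul_sum_sq (s := Finset.univ)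
          (f := fun j => pdM k A x i j * ξ j)
        simpa [mulVec, dotProduct] using this
    _ ≤ ∑ _i : Fin n, (n : ℝ) * ∑ j, (C * α) * (d x j * ξ j ^ 2) := by
        apply Finset.sum_le_sum; intro i _
        apply mul_le_mul_of_nonneg_left _ (Nat.cast_nonneg n)
        apply Finset.sum_le_sum; intro j _
        have e1 : (pdM k A x i j * ξ j) ^ 2 = (pdM k A x i j) ^ 2 * ξ j ^ 2 := by ring
        rw [e1]
        calc (pdM k A x i j) ^ 2 * ξ j ^ 2
            ≤ (C * A x j j) * ξ j ^ 2 :=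
              mul_le_mul_of_nonneg_right (hentry i j) (sq_nonneg _)
          _ ≤ (C * (α * d x j)) * ξ j ^ 2 :=
              mul_le_mul_of_nonneg_right
                (mul_le_mul_of_nonneg_left (hdiagle j) hC) (sq_nonneg _)
          _ = (C * α) * (d x j * ξ j ^ 2) := by ring
    _ = (n : ℝ) ^ 2 * (C * α) * ∑ j, d x j * ξ j ^ 2 := by
        rw [Finset.sum_const, Finset.card_univ, Fintype.card_fin, nsmul_eq_mul,
          Finset.mul_sum, Finset.mul_sum]
        rw [Finset.mul_sum]
        exact Finset.sum_congr rfl (fun j _ => by ring)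
    _ = (n : ℝ) ^ 2 * (C * α) * (ξ ⬝ᵥ (Matrix.diagonal (d x)) *ᵥ ξ) := by rw [hdiag]
    _ ≤ (n : ℝ) ^ 2 * (C * α) * ((ξ ⬝ᵥ (A x) *ᵥ ξ) / β) :=
        mul_le_mul_of_nonneg_left hdd (by positivity)
    _ = ((n : ℝ) ^ 2 * C * α / β) * (ξ ⬝ᵥ (A x) *ᵥ ξ) := by ring
    _ ≤ (Real.sqrt ((n : ℝ) ^ 2 * C * α / β + 1)) ^ 2 * (ξ ⬝ᵥ (A x) *ᵥ ξ) := by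
        rw [Real.sq_sqrt (by positivity)]
        nlinarith [hAx]

theorem stmt_3 {M n : ℕ} (hM : 1 ≤ M)
    (A : E M → Matrix (Fin n) (Fin n) ℝ)
    (hsym : ∀ x, (A x).IsSymm)
    (hC2 : ∀ i j : Fin n, ContDiff ℝ 2 (fun x => A x i j))
    (hpsd : ∀ x, (A x).PosSemidef)
    (d : E M → Fin n → ℝ) (hd : ∀ x k, 0 ≤ d x k)
    (β α : ℝ) (hβ : 0 < β) (hβα : β ≤ α)
    (hcomp : ∀ (x : E M) (ξ : Fin n → ℝ),
        β * (ξ ⬝ᵥ (Matrix.diagonal (d x)) *ᵥ ξ) ≤ ξ ⬝ᵥ (A x) *ᵥ ξ ∧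
        ξ ⬝ᵥ (A x) *ᵥ ξ ≤ α * (ξ ⬝ᵥ (Matrix.diagonal (d x)) *ᵥ ξ)) :
    (Subordinate A ↔ ∃ C : ℝ, ∀ (x : E M) (i j : Fin n),
        ‖fderiv ℝ (fun y => A y i j) x‖ ^ 2 ≤ C * min (A x i i) (A x j j)) ∧
    ∀ (lam : E M → ℝ) (c₀ C₀ : ℝ), 0 < c₀ → c₀ ≤ C₀ →
      (∀ (x : E M) (i : Fin n), c₀ * lam x ≤ A x i i ∧ A x i i ≤ C₀ * lam x) →
      (Subordinate A ↔ ∃ C : ℝ, ∀ (x : E M) (i j : Fin n),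
        ‖fderiv ℝ (fun y => A y i j) x‖ ^ 2 ≤ C * lam x) := by
  have hdiagnn : ∀ (x : E M) (i : Fin n), 0 ≤ A x i i := by
    intro x i
    have := (hpsd x).dotProduct_mulVec_nonneg (Pi.single i 1)
    simpa [single_dotProduct, mulVec_single] using this
  constructor
  · constructor
    · intro h
      obtain ⟨C, _, hC⟩ := fwd A hsym h
      exact ⟨C, hC⟩
    · rintro ⟨C, hC⟩
      apply bwd A hpsd d β α hβ hβα hcomp (max C 0) (le_max_right _ _)
      intro x i j
      refine le_trans (hC x i j) ?_
      have hmin : 0 ≤ min (A x i i) (A x j j) :=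
        le_min (hdiagnn x i) (hdiagnn x j)
      exact mul_le_mul_of_nonneg_right (le_max_left _ _) hmin
  · intro lam c₀ C₀ hc₀ hcC hl
    constructor
    · intro h
      obtain ⟨C, hC0, hC⟩ := fwd A hsym h
      refine ⟨C * C₀, fun x i j => ?_⟩
      refine le_trans (hC x i j) ?_
      have hm : min (A x i i) (A x j j) ≤ C₀ * lam x :=
        le_trans (min_le_left _ _) (hl x i).2
      calc C * min (A x i i) (A x j j) ≤ C * (C₀ * lam x) :=
            mul_le_mul_of_nonneg_left hm hC0
        _ = C * C₀ * lam x := by ring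
    · rintro ⟨C, hC⟩
      apply bwd A hpsd d β α hβ hβα hcomp (max C 0 / c₀) (by positivity)
      intro x i j
      have hlam : 0 ≤ lam x := by
        have h1 := (hl x i).2
        have h2 := hdiagnn x i
        nlinarith
      have hC' : ‖fderiv ℝ (fun y => A y i j) x‖ ^ 2 ≤ max C 0 * lam x :=
        le_trans (hC x i j) (mul_le_mul_of_nonneg_right (le_max_left _ _) hlam)
      have key : ∀ m : Fin n, max C 0 * lam x ≤ max C 0 / c₀ * A x m m := by
        intro m
        have := (hl x m).1
        rw [div_mul_eq_mul_div, le_div_iff₀ hc₀]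
        calc max C 0 * lam x * c₀ = max C 0 * (c₀ * lam x) := by ring
          _ ≤ max C 0 * A x m m :=
            mul_le_mul_of_nonneg_left this (le_max_right _ _)
      refine le_trans hC' ?_
      rcases min_cases (A x i i) (A x j j) with ⟨hm, _⟩ | ⟨hm, _⟩
      · rw [hm]; exact key i
      · rw [hm]; exact key j

end
end

section
/- Let n ≥ 2 and let A(x) = [a_{k,j}(x)] be a diagonally elliptical symmetric n×n matrix-valued function on ℝ^M. For x ≠ 0 let A(x) = Z(x)Z(x)ᵀ + B(x) be its 1-Square Decomposition, with lower-right (n−1)×(n−1) block Q(x) = [q_{k,j}(x)]_{k,j=2}^{n}. Then there exist constants 0 < c ≤ C, independent of x, such that for all x ≠ 0: Q(x) is positive definite and c·Q_diag(x) ≼ Q(x) ≼ C·Q_diag(x) (so Q is diagonally elliptical); c·a_{i,i}(x) ≤ q_{i,i}(x) ≤ C·a_{i,i}(x) for 2 ≤ i ≤ n; Z(x)Z(x)ᵀ ≼ C·A(x); and c·a_{1,1}(x)·e₁e₁ᵀ ≼ Z(x)Z(x)ᵀ + Σ_{k=2}^{n} a_{k,k}(x)·e_k e_kᵀ ≼ C·A(x).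 -/
open Matrix

noncomputable section

def mLE {n : ℕ} (A B : Matrix (Fin n) (Fin n) ℝ) : Prop := (B - A).PosSemidef

-- auxiliary lemmas

lemma hermOfSymm {n : ℕ} {M : Matrix (Fin n) (Fin n) ℝ} (h : ∀ i j, M i j = M j i) :
    M.IsHermitian := by
  ext i j
  simp [Matrix.conjTranspose_apply, h j i]

lemma psdOfQuad {n : ℕ} {M : Matrix (Fin n) (Fin n) ℝ} (h1 : ∀ i j, M i j = M j i)
    (h2 : ∀ ξ : Fin n → ℝ, 0 ≤ ξ ⬝ᵥ M *ᵥ ξ) : M.PosSemidef := by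
  refine posSemidef_iff_dotProduct_mulVec.mpr ⟨hermOfSymm h1, fun x => by simpa using h2 x⟩

lemma quadExpand {n : ℕ} (a : Matrix (Fin n) (Fin n) ℝ) (ξ : Fin n → ℝ) :
    ξ ⬝ᵥ a *ᵥ ξ = ∑ k, ∑ j, ξ k * a k j * ξ j := by
  simp only [dotProduct, mulVec, Finset.mul_sum]
  exact Finset.sum_congr rfl fun k _ => Finset.sum_congr rfl fun j _ => by ring

lemma quadDiag {n : ℕ} (f ξ : Fin n → ℝ) :
    ξ ⬝ᵥ Matrix.diagonal f *ᵥ ξ = ∑ k, f k * ξ k ^ 2 := by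
  simp only [dotProduct, Matrix.mulVec_diagonal]
  exact Finset.sum_congr rfl fun k _ => by ring

lemma diagSymm {n : ℕ} (f : Fin n → ℝ) (i j : Fin n) :
    Matrix.diagonal f i j = Matrix.diagonal f j i := by
  rcases eq_or_ne i j with h | h
  · subst h; rfl
  · rw [Matrix.diagonal_apply_ne _ h, Matrix.diagonal_apply_ne _ h.symm]

lemma quadSingle {n : ℕ} (a : Matrix (Fin n) (Fin n) ℝ) (i : Fin n) :
    (Pi.single i 1 : Fin n → ℝ) ⬝ᵥ a *ᵥ (Pi.single i 1) = a i i := by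
  rw [quadExpand]
  rw [Finset.sum_eq_single i]
  · rw [Finset.sum_eq_single i]
    · simp
    · intro j _ hj; simp [Pi.single_apply, hj]
    · simp
  · intro k _ hk; simp [Pi.single_apply, hk]
  · simp

lemma quadCons {n : ℕ} (a : Matrix (Fin (n+1)) (Fin (n+1)) ℝ)
    (hs : ∀ i j, a i j = a j i) (t : ℝ) (ξ : Fin n → ℝ) :
    (Fin.cons t ξ) ⬝ᵥ a *ᵥ (Fin.cons t ξ)
      = a 0 0 * t ^ 2 + 2 * t * (∑ k, a 0 k.succ * ξ k)
        + ∑ k, ∑ j, ξ k * a k.succ j.succ * ξ j := by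
  rw [quadExpand, Fin.sum_univ_succ]
  simp only [Fin.cons_zero, Fin.cons_succ]
  rw [Fin.sum_univ_succ]
  have h1 : ∀ k : Fin n, (∑ j : Fin (n+1), ξ k * a k.succ j * (Fin.cons t ξ : Fin (n+1) → ℝ) j)
      = ξ k * a 0 k.succ * t + ∑ j : Fin n, ξ k * a k.succ j.succ * ξ j := by
    intro k
    rw [Fin.sum_univ_succ]
    simp only [Fin.cons_zero, Fin.cons_succ, hs k.succ 0]
  rw [Finset.sum_congr rfl fun k _ => h1 k, Finset.sum_add_distrib]
  simp only [Fin.cons_zero, Fin.cons_succ]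
  have h2 : ∑ k : Fin n, ξ k * a 0 k.succ * t = t * ∑ k : Fin n, a 0 k.succ * ξ k := by
    rw [Finset.mul_sum]; exact Finset.sum_congr rfl fun k _ => by ring
  have h3 : ∑ j : Fin n, t * a 0 j.succ * ξ j = t * ∑ k : Fin n, a 0 k.succ * ξ k := by
    rw [Finset.mul_sum]; exact Finset.sum_congr rfl fun k _ => by ring
  rw [h2, h3]; ring

lemma keyIneq (β α a00 u s T : ℝ) (hβ : 0 < β) (hβα : β ≤ α) (ha : 0 < a00)
    (hT : 0 ≤ T) (hs2 : β * s ^ 2 ≤ α * a00 * T) :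
    β / (α + β) * a00 * u ^ 2 ≤ (a00 * u + s) ^ 2 / a00 + T := by
  have hab : 0 < α + β := by linarith
  have hα : 0 < α := lt_of_lt_of_le hβ hβα
  have key2 : β * a00 ^ 2 * u ^ 2 ≤ ((a00 * u + s) ^ 2 + T * a00) * (α + β) := by
    nlinarith [sq_nonneg (α * (a00 * u) + (α + β) * s), mul_nonneg hT ha.le, hs2,
      mul_pos hα hab]
  rw [div_add' _ _ _ ha.ne', div_mul_eq_mul_div, div_mul_eq_mul_div,
    div_le_div_iff₀ hab ha]
  nlinarith [key2]

set_option maxHeartbeats 2000000 in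
theorem stmt_7 {M n : ℕ} (hM : 1 ≤ M) (hn : 1 ≤ n)
    (A : E M → Matrix (Fin (n + 1)) (Fin (n + 1)) ℝ)
    (hsym : ∀ x, (A x).IsSymm)
    (d : E M → Fin (n + 1) → ℝ) (β α : ℝ) (hβ : 0 < β) (hβα : β ≤ α)
    (hcomp : ∀ (x : E M) (ξ : Fin (n + 1) → ℝ),
        β * (ξ ⬝ᵥ (Matrix.diagonal (d x)) *ᵥ ξ) ≤ ξ ⬝ᵥ (A x) *ᵥ ξ ∧
        ξ ⬝ᵥ (A x) *ᵥ ξ ≤ α * (ξ ⬝ᵥ (Matrix.diagonal (d x)) *ᵥ ξ))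
    (hpd : ∀ x : E M, x ≠ 0 → (A x).PosDef)
    (Z : E M → Fin (n + 1) → ℝ)
    (hZ : ∀ x k, Z x k = A x k 0 / Real.sqrt (A x 0 0))
    (Q : E M → Matrix (Fin n) (Fin n) ℝ)
    (hQ : ∀ x (k j : Fin n), Q x k j = A x k.succ j.succ - A x 0 k.succ * A x 0 j.succ / A x 0 0) :
    ∃ c C : ℝ, 0 < c ∧ c ≤ C ∧ ∀ x : E M, x ≠ 0 →
      (Q x).PosDef ∧
      mLE (c • Matrix.diagonal (fun k => Q x k k)) (Q x) ∧
      mLE (Q x) (C • Matrix.diagonal (fun k => Q x k k)) ∧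
      (∀ i : Fin n, c * A x i.succ i.succ ≤ Q x i i ∧ Q x i i ≤ C * A x i.succ i.succ) ∧
      mLE (vecMulVec (Z x) (Z x)) (C • A x) ∧
      mLE (Matrix.diagonal (fun k : Fin (n + 1) => if k = 0 then c * A x 0 0 else 0))
          (vecMulVec (Z x) (Z x) +
            Matrix.diagonal (fun k : Fin (n + 1) => if k = 0 then 0 else A x k k)) ∧
      mLE (vecMulVec (Z x) (Z x) +
            Matrix.diagonal (fun k : Fin (n + 1) => if k = 0 then 0 else A x k k))
          (C • A x) := by
  have hα : 0 < α := lt_of_lt_of_le hβ hβα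
  have hab : 0 < α + β := by linarith
  refine ⟨β / (α + β), (α + β) / β, by positivity, ?_, ?_⟩
  · rw [div_le_div_iff₀ hab hβ]; nlinarith
  intro x hx
  -- basic facts
  have hs : ∀ i j, A x i j = A x j i := fun i j => ((hsym x).apply j i)
  have hsingle_ne : ∀ i : Fin (n+1), (Pi.single i 1 : Fin (n+1) → ℝ) ≠ 0 := by
    intro i h
    have := congrFun h i
    simp [Pi.single_apply] at this
  have hAdiag_pos : ∀ k, 0 < A x k k := by
    intro k
    have := (posDef_iff_dotProduct_mulVec.mp (hpd x hx)).2 (hsingle_ne k)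
    simpa [quadSingle] using this
  have hdiagSingle : ∀ k : Fin (n+1),
      (Pi.single k 1 : Fin (n+1) → ℝ) ⬝ᵥ Matrix.diagonal (d x) *ᵥ (Pi.single k 1) = d x k := by
    intro k; rw [quadSingle, Matrix.diagonal_apply_eq]
  have hAd : ∀ k, β * d x k ≤ A x k k ∧ A x k k ≤ α * d x k := by
    intro k
    have h := hcomp x (Pi.single k 1)
    rw [hdiagSingle, quadSingle] at h
    exact h
  have hdpos : ∀ k, 0 < d x k := by
    intro k
    have h1 := (hAd k).2
    have h2 := hAdiag_pos k
    nlinarith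
  have ha00 : 0 < A x 0 0 := hAdiag_pos 0
  -- notation
  set a00 := A x 0 0 with ha00def
  -- quadratic form of Q
  have hQquad : ∀ ξ : Fin n → ℝ, ξ ⬝ᵥ Q x *ᵥ ξ
      = (∑ k, ∑ j, ξ k * A x k.succ j.succ * ξ j)
        - (∑ k, A x 0 k.succ * ξ k) ^ 2 / a00 := by
    intro ξ
    rw [quadExpand]
    have h1 : ∀ k j, ξ k * Q x k j * ξ j
        = ξ k * A x k.succ j.succ * ξ j
          - (A x 0 k.succ * ξ k) * (A x 0 j.succ * ξ j) / a00 := by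
      intro k j; rw [hQ]; ring
    rw [Finset.sum_congr rfl fun k _ => Finset.sum_congr rfl fun j _ => h1 k j]
    rw [Finset.sum_congr rfl fun (k : Fin n) _ => Finset.sum_sub_distrib _ _,
        Finset.sum_sub_distrib]
    congr 1
    rw [sq, Finset.sum_mul_sum, Finset.sum_div]
    exact Finset.sum_congr rfl fun k _ => by rw [Finset.sum_div]
  -- key bounds on Q quadratic form
  have hdiagCons : ∀ (t : ℝ) (ξ : Fin n → ℝ),
      (Fin.cons t ξ : Fin (n+1) → ℝ) ⬝ᵥ Matrix.diagonal (d x) *ᵥ (Fin.cons t ξ)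
        = d x 0 * t ^ 2 + ∑ k : Fin n, d x k.succ * ξ k ^ 2 := by
    intro t ξ
    rw [quadDiag, Fin.sum_univ_succ]
    simp [Fin.cons_zero, Fin.cons_succ]
  have keylow : ∀ ξ : Fin n → ℝ,
      β * ∑ k, d x k.succ * ξ k ^ 2 ≤ ξ ⬝ᵥ Q x *ᵥ ξ := by
    intro ξ
    set s := ∑ k, A x 0 k.succ * ξ k with hsdef
    set t := -s / a00 with htdef
    have h := (hcomp x (Fin.cons t ξ)).1
    rw [quadCons (A x) hs, hdiagCons, ← hsdef, ← ha00def] at h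
    have hquad : a00 * t ^ 2 + 2 * t * s = - s ^ 2 / a00 := by
      rw [htdef]; field_simp; ring
    have hQv := hQquad ξ
    rw [← hsdef] at hQv
    have hd0 : 0 ≤ d x 0 * t ^ 2 := mul_nonneg (hdpos 0).le (sq_nonneg t)
    have hsum : 0 ≤ ∑ k : Fin n, d x k.succ * ξ k ^ 2 :=
      Finset.sum_nonneg fun k _ => mul_nonneg (hdpos k.succ).le (sq_nonneg _)
    clear_value s t
    have e : ξ ⬝ᵥ Q x *ᵥ ξ
        = a00 * t ^ 2 + 2 * t * s + ∑ k : Fin n, ∑ j : Fin n, ξ k * A x k.succ j.succ * ξ j := by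
      linear_combination hQv - hquad
    rw [e]
    nlinarith [mul_nonneg hβ.le hd0]
  have keyhigh : ∀ ξ : Fin n → ℝ,
      ξ ⬝ᵥ Q x *ᵥ ξ ≤ α * ∑ k, d x k.succ * ξ k ^ 2 := by
    intro ξ
    set s := ∑ k, A x 0 k.succ * ξ k with hsdef
    have h := (hcomp x (Fin.cons 0 ξ)).2
    rw [quadCons (A x) hs, hdiagCons] at h
    have hQv := hQquad ξ
    rw [← hsdef] at hQv
    have hs2 : 0 ≤ s ^ 2 / a00 := by positivity
    nlinarith
  -- Q quadratic with single vectors: diagonal entries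
  have hQd : ∀ i : Fin n, β * d x i.succ ≤ Q x i i ∧ Q x i i ≤ α * d x i.succ := by
    intro i
    have h1 := keylow (Pi.single i 1)
    have h2 := keyhigh (Pi.single i 1)
    have h3 : ∑ k, d x k.succ * (Pi.single i 1 : Fin n → ℝ) k ^ 2 = d x i.succ := by
      rw [Finset.sum_eq_single i] <;> simp +contextual [Pi.single_apply]
    rw [quadSingle, h3] at h1 h2
    exact ⟨h1, h2⟩
  have hQsym : ∀ i j, Q x i j = Q x j i := by
    intro i j; rw [hQ, hQ, hs i.succ j.succ]; ring
  -- full A quadratic decomposition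
  have hAquad : ∀ ξ : Fin (n+1) → ℝ, ξ ⬝ᵥ A x *ᵥ ξ
      = (∑ k, A x k 0 * ξ k) ^ 2 / a00 + (Fin.tail ξ) ⬝ᵥ Q x *ᵥ (Fin.tail ξ) := by
    intro ξ
    have hξ : ξ = Fin.cons (ξ 0) (Fin.tail ξ) := (Fin.cons_self_tail ξ).symm
    have hS : ∑ k, A x k 0 * ξ k
        = a00 * ξ 0 + ∑ k : Fin n, A x 0 k.succ * Fin.tail ξ k := by
      rw [Fin.sum_univ_succ]
      congr 1
      exact Finset.sum_congr rfl fun k _ => by rw [hs k.succ 0]; rfl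
    conv_lhs => rw [hξ]
    rw [quadCons (A x) hs, hQquad, hS]
    field_simp
    ring
  -- Z quadratic form
  have hZquad : ∀ ξ : Fin (n+1) → ℝ,
      ξ ⬝ᵥ vecMulVec (Z x) (Z x) *ᵥ ξ = (∑ k, A x k 0 * ξ k) ^ 2 / a00 := by
    intro ξ
    have h1 : ξ ⬝ᵥ vecMulVec (Z x) (Z x) *ᵥ ξ = (∑ k, Z x k * ξ k) ^ 2 := by
      rw [quadExpand, sq, Finset.sum_mul_sum]
      exact Finset.sum_congr rfl fun k _ => Finset.sum_congr rfl fun j _ => by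
        rw [Matrix.vecMulVec_apply]; ring
    rw [h1]
    have h2 : ∑ k, Z x k * ξ k = (∑ k, A x k 0 * ξ k) / Real.sqrt a00 := by
      rw [Finset.sum_div]
      exact Finset.sum_congr rfl fun k _ => by rw [hZ]; ring
    rw [h2, div_pow, Real.sq_sqrt ha00.le]
  have hAquad_nonneg : ∀ ξ : Fin (n+1) → ℝ, 0 ≤ ξ ⬝ᵥ A x *ᵥ ξ := by
    intro ξ
    rw [hAquad]
    have := keylow (Fin.tail ξ)
    have hsum : 0 ≤ ∑ k, d x k.succ * Fin.tail ξ k ^ 2 :=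
      Finset.sum_nonneg fun k _ => mul_nonneg (hdpos k.succ).le (sq_nonneg _)
    have : 0 ≤ (Fin.tail ξ) ⬝ᵥ Q x *ᵥ (Fin.tail ξ) := by nlinarith
    positivity
  -- the L matrix quadratic form
  have hLdiag : ∀ ξ : Fin (n+1) → ℝ,
      ξ ⬝ᵥ Matrix.diagonal (fun k : Fin (n+1) => if k = 0 then 0 else A x k k) *ᵥ ξ
        = ∑ k : Fin n, A x k.succ k.succ * ξ k.succ ^ 2 := by
    intro ξ
    rw [quadDiag, Fin.sum_univ_succ]
    simp [Fin.succ_ne_zero]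
  have hc0diag : ∀ ξ : Fin (n+1) → ℝ,
      ξ ⬝ᵥ Matrix.diagonal (fun k : Fin (n+1) => if k = 0 then β / (α + β) * a00 else 0) *ᵥ ξ
        = β / (α + β) * a00 * ξ 0 ^ 2 := by
    intro ξ
    rw [quadDiag, Fin.sum_univ_succ]
    simp [Fin.succ_ne_zero]
  refine ⟨?_, ?_, ?_, ?_, ?_, ?_, ?_⟩
  -- 1: Q PosDef
  · refine posDef_iff_dotProduct_mulVec.mpr ⟨hermOfSymm hQsym, fun ξ hξ => ?_⟩
    have h1 := keylow ξ
    have h2 : 0 < ∑ k, d x k.succ * ξ k ^ 2 := by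
      obtain ⟨i, hi⟩ := Function.ne_iff.mp hξ
      refine Finset.sum_pos' (fun k _ => mul_nonneg (hdpos k.succ).le (sq_nonneg _))
        ⟨i, Finset.mem_univ i, ?_⟩
      have h0 : 0 < ξ i ^ 2 := lt_of_le_of_ne (sq_nonneg _) (Ne.symm (pow_ne_zero 2 hi))
      exact mul_pos (hdpos i.succ) h0
    have : 0 < ξ ⬝ᵥ Q x *ᵥ ξ := by nlinarith
    simpa using this
  -- 2: c • Qdiag ≼ Q
  · refine psdOfQuad (fun i j => ?_) (fun ξ => ?_)
    · simp only [Matrix.sub_apply, Matrix.smul_apply]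
      rw [hQsym i j, diagSymm]
    · rw [Matrix.sub_mulVec, dotProduct_sub, Matrix.smul_mulVec, dotProduct_smul,
        quadDiag]
      have h1 := keylow ξ
      have hSq : ∑ k, Q x k k * ξ k ^ 2 ≤ α * ∑ k, d x k.succ * ξ k ^ 2 := by
        rw [Finset.mul_sum]
        refine Finset.sum_le_sum fun k _ => ?_
        have := (hQd k).2
        nlinarith [sq_nonneg (ξ k)]
      have hca : β / (α + β) * α ≤ β := by
        rw [div_mul_eq_mul_div, div_le_iff₀ hab]; nlinarith
      have hc0 : (0:ℝ) ≤ β / (α + β) := by positivity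
      have hDq : 0 ≤ ∑ k, d x k.succ * ξ k ^ 2 :=
        Finset.sum_nonneg fun k _ => mul_nonneg (hdpos k.succ).le (sq_nonneg _)
      simp only [smul_eq_mul]
      nlinarith [mul_le_mul_of_nonneg_left hSq hc0,
        mul_le_mul_of_nonneg_right hca hDq]
  -- 3: Q ≼ C • Qdiag
  · refine psdOfQuad (fun i j => ?_) (fun ξ => ?_)
    · simp only [Matrix.sub_apply, Matrix.smul_apply]
      rw [hQsym i j, diagSymm]
    · rw [Matrix.sub_mulVec, dotProduct_sub, Matrix.smul_mulVec, dotProduct_smul,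
        quadDiag]
      have h2 := keyhigh ξ
      have hSq : β * ∑ k, d x k.succ * ξ k ^ 2 ≤ ∑ k, Q x k k * ξ k ^ 2 := by
        rw [Finset.mul_sum]
        refine Finset.sum_le_sum fun k _ => ?_
        have := (hQd k).1
        nlinarith [sq_nonneg (ξ k)]
      have hC0 : (0:ℝ) ≤ (α + β) / β := by positivity
      have hCb : (α + β) / β * β = α + β := div_mul_cancel₀ _ hβ.ne'
      have hDq : 0 ≤ ∑ k, d x k.succ * ξ k ^ 2 :=
        Finset.sum_nonneg fun k _ => mul_nonneg (hdpos k.succ).le (sq_nonneg _)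
      simp only [smul_eq_mul]
      nlinarith [mul_le_mul_of_nonneg_left hSq hC0, hCb, mul_le_mul_of_nonneg_right hCb.le hDq,
        mul_le_mul_of_nonneg_right hCb.ge hDq]
  -- 4: diagonal entries comparable
  · intro i
    have h1 := (hQd i).1
    have h2 := (hQd i).2
    have h3 := (hAd i.succ).1
    have h4 := (hAd i.succ).2
    have hd := hdpos i.succ
    have ha := hAdiag_pos i.succ
    constructor
    · rw [div_mul_eq_mul_div, div_le_iff₀ hab]
      nlinarith [mul_le_mul_of_nonneg_left h4 hβ.le, mul_le_mul_of_nonneg_left h1 hab.le,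
        mul_nonneg (mul_nonneg hβ.le hβ.le) hd.le]
    · rw [div_mul_eq_mul_div, le_div_iff₀ hβ]
      nlinarith [mul_le_mul_of_nonneg_right h2 hβ.le, mul_le_mul_of_nonneg_left h3 hα.le,
        mul_nonneg hβ.le ha.le]
  -- 5: ZZᵀ ≼ C • A
  · refine psdOfQuad (fun i j => ?_) (fun ξ => ?_)
    · simp only [Matrix.sub_apply, Matrix.smul_apply, Matrix.vecMulVec_apply, hs i j]
      ring
    · rw [Matrix.sub_mulVec, dotProduct_sub, Matrix.smul_mulVec, dotProduct_smul,
        hZquad]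
      have h1 := hAquad ξ
      have h2 := keylow (Fin.tail ξ)
      have hsum : 0 ≤ ∑ k, d x k.succ * Fin.tail ξ k ^ 2 :=
        Finset.sum_nonneg fun k _ => mul_nonneg (hdpos k.succ).le (sq_nonneg _)
      have hA0 := hAquad_nonneg ξ
      have hC1 : (1 : ℝ) ≤ (α + β) / β := by
        rw [le_div_iff₀ hβ]; nlinarith
      simp only [smul_eq_mul]
      nlinarith [mul_le_mul_of_nonneg_right hC1 hA0]
  -- 6: c * a00 * e0 ≼ L
  · refine psdOfQuad (fun i j => ?_) (fun ξ => ?_)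
    · simp only [Matrix.sub_apply, Matrix.add_apply, Matrix.vecMulVec_apply]
      rw [diagSymm (fun k : Fin (n + 1) => if k = 0 then 0 else A x k k) i j,
        diagSymm (fun k : Fin (n + 1) => if k = 0 then β / (α + β) * a00 else 0) i j,
        mul_comm (Z x i) (Z x j)]
    · rw [Matrix.sub_mulVec, dotProduct_sub, Matrix.add_mulVec, dotProduct_add,
        hZquad, hLdiag, hc0diag]
      set s := ∑ k : Fin n, A x 0 k.succ * Fin.tail ξ k with hsdef
      set T := ∑ k : Fin n, A x k.succ k.succ * ξ k.succ ^ 2 with hTdef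
      have hS : ∑ k, A x k 0 * ξ k = a00 * ξ 0 + s := by
        rw [Fin.sum_univ_succ]
        congr 1
        rw [hsdef]; exact Finset.sum_congr rfl fun k _ => by rw [hs k.succ 0]; rfl
      have hT0 : 0 ≤ T := by
        rw [hTdef]
        exact Finset.sum_nonneg fun k _ => mul_nonneg (hAdiag_pos k.succ).le (sq_nonneg _)
      have hsum : 0 ≤ ∑ k, d x k.succ * Fin.tail ξ k ^ 2 :=
        Finset.sum_nonneg fun k _ => mul_nonneg (hdpos k.succ).le (sq_nonneg _)
      have hs2 : β * s ^ 2 ≤ α * a00 * T := by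
        have h1 := hAquad (Fin.cons 0 (Fin.tail ξ))
        have h2 := (hcomp x (Fin.cons (0:ℝ) (Fin.tail ξ))).2
        rw [hdiagCons] at h2
        rw [Fin.tail_cons] at h1
        have hSv : ∑ k, A x k 0 * (Fin.cons (0:ℝ) (Fin.tail ξ)) k = s := by
          rw [Fin.sum_univ_succ]
          simp only [Fin.cons_zero, Fin.cons_succ, mul_zero, zero_add]
          rw [hsdef]
          exact Finset.sum_congr rfl fun k _ => by rw [hs k.succ 0]
        rw [hSv] at h1
        have h5 := keylow (Fin.tail ξ)
        have hq0 : 0 ≤ Fin.tail ξ ⬝ᵥ Q x *ᵥ Fin.tail ξ := by nlinarith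
        have hX : s ^ 2 / a00 ≤ α * ∑ k, d x k.succ * Fin.tail ξ k ^ 2 := by nlinarith
        have hs2a : s ^ 2 ≤ α * (∑ k, d x k.succ * Fin.tail ξ k ^ 2) * a00 := by
          rw [div_le_iff₀ ha00] at hX; linarith
        have h4 : β * ∑ k, d x k.succ * Fin.tail ξ k ^ 2 ≤ T := by
          rw [hTdef, Finset.mul_sum]
          refine Finset.sum_le_sum fun k _ => ?_
          have := (hAd k.succ).1
          have : β * (d x k.succ * Fin.tail ξ k ^ 2) ≤ A x k.succ k.succ * Fin.tail ξ k ^ 2 := by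
            nlinarith [sq_nonneg (Fin.tail ξ k)]
          exact this
        have e1 : β * (α * (∑ k, d x k.succ * Fin.tail ξ k ^ 2) * a00)
            = α * a00 * (β * ∑ k, d x k.succ * Fin.tail ξ k ^ 2) := by ring
        have e2 := mul_le_mul_of_nonneg_left h4 (mul_nonneg hα.le ha00.le)
        have e3 := mul_le_mul_of_nonneg_left hs2a hβ.le
        linarith [e1 ▸ e3]
      have := keyIneq β α a00 (ξ 0) s T hβ hβα ha00 hT0 hs2
      rw [hS]
      linarith
  -- 7: L ≼ C • A
  · refine psdOfQuad (fun i j => ?_) (fun ξ => ?_)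
    · simp only [Matrix.sub_apply, Matrix.smul_apply, Matrix.add_apply,
        Matrix.vecMulVec_apply, hs i j]
      rw [diagSymm (fun k : Fin (n + 1) => if k = 0 then 0 else A x k k) i j,
        mul_comm (Z x i) (Z x j)]
    · rw [Matrix.sub_mulVec, dotProduct_sub, Matrix.smul_mulVec, dotProduct_smul,
        Matrix.add_mulVec, dotProduct_add, hZquad, hLdiag]
      have h1 := hAquad ξ
      have h2 := keylow (Fin.tail ξ)
      have hsumq : 0 ≤ ∑ k, d x k.succ * Fin.tail ξ k ^ 2 :=
        Finset.sum_nonneg fun k _ => mul_nonneg (hdpos k.succ).le (sq_nonneg _)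
      have hq0 : 0 ≤ Fin.tail ξ ⬝ᵥ Q x *ᵥ Fin.tail ξ := by nlinarith
      have hX : (∑ k, A x k 0 * ξ k) ^ 2 / a00 ≤ ξ ⬝ᵥ A x *ᵥ ξ := by linarith
      have hT : ∑ k : Fin n, A x k.succ k.succ * ξ k.succ ^ 2
          ≤ α * ∑ k : Fin n, d x k.succ * ξ k.succ ^ 2 := by
        rw [Finset.mul_sum]
        refine Finset.sum_le_sum fun k _ => ?_
        have := (hAd k.succ).2
        nlinarith [sq_nonneg (ξ k.succ)]
      have hDfull := (hcomp x ξ).1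
      rw [quadDiag, Fin.sum_univ_succ] at hDfull
      have hd0 : 0 ≤ d x 0 * ξ 0 ^ 2 := mul_nonneg (hdpos 0).le (sq_nonneg _)
      have htail : ∑ k : Fin n, d x k.succ * ξ k.succ ^ 2
          = ∑ k : Fin n, d x k.succ * Fin.tail ξ k ^ 2 := rfl
      have hsd : β * ∑ k : Fin n, d x k.succ * ξ k.succ ^ 2 ≤ ξ ⬝ᵥ A x *ᵥ ξ := by
        nlinarith
      have hfin : ((∑ k, A x k 0 * ξ k) ^ 2 / a00
            + ∑ k : Fin n, A x k.succ k.succ * ξ k.succ ^ 2) * β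
          ≤ (α + β) * (ξ ⬝ᵥ A x *ᵥ ξ) := by
        nlinarith [mul_le_mul_of_nonneg_left hX hβ.le,
          mul_le_mul_of_nonneg_left hT hβ.le,
          mul_le_mul_of_nonneg_left hsd hα.le, hAquad_nonneg ξ]
      have hstep : (∑ k, A x k 0 * ξ k) ^ 2 / a00
            + ∑ k : Fin n, A x k.succ k.succ * ξ k.succ ^ 2
          ≤ (α + β) / β * (ξ ⬝ᵥ A x *ᵥ ξ) := by
        rw [div_mul_eq_mul_div, le_div_iff₀ hβ]; linarith
      simp only [smul_eq_mul]
      linarith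
end
end

section
/- Let 1/4 ≤ ε < 1, 0 < δ' < 1, K > 0, and let a : ℝ^M → (0, 1] be four times continuously differentiable with |D^μ a(x)| ≤ K·a(x)^{[1−|μ|ε]_+ + δ'} for all x and all multi-indices μ with 1 ≤ |μ| ≤ 4. Then there is a constant C, depending only on K, ε, δ' and M, such that |D^γ (1/a)(x)| ≤ C·a(x)^{−1−|γ|ε+δ'} for all x and all multi-indices γ with 1 ≤ |γ| ≤ 4. -/
noncomputable section

noncomputable def pd {M : ℕ} (i : Fin M) (f : E M → ℝ) : E M → ℝ :=
  fun x => fderiv ℝ f x (EuclideanSpace.single i 1)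

/-- Iterated partial derivative `D^μ` for a multi-index given as a list of directions. -/
noncomputable def Dmu {M : ℕ} (μ : List (Fin M)) (f : E M → ℝ) : E M → ℝ :=
  μ.foldr pd f

namespace Stmt9Aux
variable {M : ℕ}

lemma contDiff_pd {n : ℕ} {f : E M → ℝ} (i : Fin M) (hf : ContDiff ℝ (n+1 : ℕ) f) :
    ContDiff ℝ (n : ℕ) (pd i f) := by
  have h1 : ContDiff ℝ (n : ℕ) (fderiv ℝ f) := hf.fderiv_right (by exact_mod_cast le_rfl)
  exact (ContinuousLinearMap.apply ℝ ℝ (EuclideanSpace.single i 1)).contDiff.comp h1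

lemma contDiff_Dmu {k : ℕ} (a : E M → ℝ) (ha : ContDiff ℝ (4:ℕ) a) (μ : List (Fin M))
    (h : μ.length + k ≤ 4) : ContDiff ℝ (k : ℕ) (Dmu μ a) := by
  induction μ generalizing k with
  | nil =>
      exact ha.of_le (by exact_mod_cast Nat.cast_le.mpr (by simpa using h) :
        (k : WithTop ℕ∞) ≤ (4:ℕ))
  | cons i μ ih =>
      have h2 : μ.length + (k+1) ≤ 4 := by simp at h; omega
      exact contDiff_pd i (ih h2)

lemma diff_Dmu (a : E M → ℝ) (ha : ContDiff ℝ (4:ℕ) a) (μ : List (Fin M))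
    (h : μ.length ≤ 3) : Differentiable ℝ (Dmu μ a) :=
  (contDiff_Dmu (k := 1) a ha μ (by omega)).differentiable (by simp)

def mods (i : Fin M) : List (List (Fin M)) → List (List (List (Fin M)))
  | [] => []
  | μ :: L => ((i :: μ) :: L) :: (mods i L).map (μ :: ·)

lemma mods_mem {i : Fin M} : ∀ {L L' : List (List (Fin M))}, L' ∈ mods i L →
    L'.length = L.length ∧ (L'.map List.length).sum = (L.map List.length).sum + 1 ∧
    (∀ ν ∈ L', ∃ μ ∈ L, ν = μ ∨ ν = i :: μ) := by
  intro L
  induction L with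
  | nil => intro L' h; simp [mods] at h
  | cons μ L ih =>
      intro L' h
      simp only [mods, List.mem_cons, List.mem_map] at h
      rcases h with rfl | ⟨L'', hL'', rfl⟩
      · refine ⟨by simp, by simp [Nat.add_right_comm], ?_⟩
        intro ν hν
        rcases List.mem_cons.1 hν with rfl | hν
        · exact ⟨μ, by simp⟩
        · exact ⟨ν, List.mem_cons_of_mem _ hν, Or.inl rfl⟩
      · obtain ⟨h1, h2, h3⟩ := ih hL''
        refine ⟨by simp [h1], by simp [h2]; omega, ?_⟩
        intro ν hν
        rcases List.mem_cons.1 hν with rfl | hν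
        · exact ⟨ν, by simp⟩
        · obtain ⟨ρ, hρ, hor⟩ := h3 ν hν
          exact ⟨ρ, List.mem_cons_of_mem _ hρ, hor⟩

lemma mods_length {i : Fin M} {L : List (List (Fin M))} : (mods i L).length = L.length := by
  induction L with
  | nil => rfl
  | cons μ L ih => simp [mods, ih]

lemma sum_map_mul_left' {α : Type*} (l : List α) (c : ℝ) (f : α → ℝ) :
    (l.map (fun y => c * f y)).sum = c * (l.map f).sum := by
  induction l with
  | nil => simp
  | cons y l ih => simp [ih]; ring

/-- product rule over a list of iterated partials -/
lemma hasFDerivAt_prod (a : E M → ℝ) (x : E M) (i : Fin M) :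
    ∀ (L : List (List (Fin M))), (∀ μ ∈ L, DifferentiableAt ℝ (Dmu μ a) x) →
    ∃ D : E M →L[ℝ] ℝ,
      HasFDerivAt (fun y => (L.map (fun μ => Dmu μ a y)).prod) D x ∧
      D (EuclideanSpace.single i 1) =
        ((mods i L).map (fun L' => (L'.map (fun μ => Dmu μ a x)).prod)).sum := by
  intro L
  induction L with
  | nil =>
      intro _
      exact ⟨0, by simpa using hasFDerivAt_const (1:ℝ) x, by simp [mods]⟩
  | cons μ L ih =>
      intro h
      obtain ⟨D, hD, hDe⟩ := ih (fun ν hν => h ν (List.mem_cons_of_mem _ hν))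
      have hμ : HasFDerivAt (Dmu μ a) (fderiv ℝ (Dmu μ a) x) x :=
        (h μ (List.mem_cons_self)).hasFDerivAt
      refine ⟨Dmu μ a x • D + (L.map (fun ν => Dmu ν a x)).prod • fderiv ℝ (Dmu μ a) x,
        ?_, ?_⟩
      · have := hμ.mul hD
        simp only [List.map_cons, List.prod_cons]
        exact this
      · have hpd : (fderiv ℝ (Dmu μ a) x) (EuclideanSpace.single i 1) = Dmu (i :: μ) a x := rfl
        simp only [ContinuousLinearMap.add_apply, ContinuousLinearMap.smul_apply, smul_eq_mul,
          mods, List.map_cons, List.sum_cons, List.map_map, hDe, hpd, List.prod_cons]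
        rw [show ((mods i L).map ((fun L' => (L'.map (fun μ => Dmu μ a x)).prod) ∘ (μ :: ·)))
            = (mods i L).map (fun L' => Dmu μ a x * (L'.map (fun ν => Dmu ν a x)).prod) from
          List.map_congr_left (fun L' _ => by simp)]
        rw [sum_map_mul_left']
        ring

def TF (a : E M → ℝ) (t : ℝ × List (List (Fin M))) (x : E M) : ℝ :=
  t.1 * (((t.2.map (fun μ => Dmu μ a x)).prod) * (a x) ^ (-(t.2.length : ℤ) - 1))

def stepT (i : Fin M) (t : ℝ × List (List (Fin M))) : List (ℝ × List (List (Fin M))) :=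
  (t.1 * (-(t.2.length : ℝ) - 1), [i] :: t.2) :: (mods i t.2).map (fun L' => (t.1, L'))

lemma diffAt_prod (a : E M → ℝ) (x : E M) (L : List (List (Fin M)))
    (h : ∀ μ ∈ L, DifferentiableAt ℝ (Dmu μ a) x) :
    DifferentiableAt ℝ (fun y => (L.map (fun μ => Dmu μ a y)).prod) x := by
  induction L with
  | nil => simpa using differentiableAt_const (1:ℝ)
  | cons μ L ih =>
      exact (h μ (List.mem_cons_self)).mul
        (ih (fun ν hν => h ν (List.mem_cons_of_mem _ hν)))

lemma hasFDerivAt_zpowa (a : E M → ℝ) (x : E M) (ha : DifferentiableAt ℝ a x)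
    (h0 : a x ≠ 0) (m : ℤ) :
    HasFDerivAt (fun y => (a y) ^ m) (((m : ℝ) * a x ^ (m - 1)) • fderiv ℝ a x) x :=
  (hasDerivAt_zpow m (a x) (Or.inl h0)).comp_hasFDerivAt x ha.hasFDerivAt

lemma diffAt_TF (a : E M → ℝ) (x : E M) (ha : DifferentiableAt ℝ a x) (h0 : a x ≠ 0)
    (t : ℝ × List (List (Fin M))) (h : ∀ μ ∈ t.2, DifferentiableAt ℝ (Dmu μ a) x) :
    DifferentiableAt ℝ (TF a t) x := by
  exact (((diffAt_prod a x t.2 h).mul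
    (hasFDerivAt_zpowa a x ha h0 _).differentiableAt).const_mul _)

/-- the key step: partial derivative of a term is the sum over `stepT`. -/
lemma pd_TF (a : E M → ℝ) (x : E M) (ha : DifferentiableAt ℝ a x) (h0 : a x ≠ 0)
    (i : Fin M) (c : ℝ) (L : List (List (Fin M)))
    (h : ∀ μ ∈ L, DifferentiableAt ℝ (Dmu μ a) x) :
    pd i (TF a (c, L)) x = ((stepT i (c, L)).map (fun t => TF a t x)).sum := by
  obtain ⟨D, hD, hDe⟩ := hasFDerivAt_prod a x i L h
  have hZ := hasFDerivAt_zpowa a x ha h0 (-(L.length : ℤ) - 1)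
  have hTF : HasFDerivAt (TF a (c, L))
      ((c : ℝ) • ((L.map (fun μ => Dmu μ a x)).prod •
          (((-(L.length : ℤ) - 1 : ℤ) : ℝ) * a x ^ (-(L.length : ℤ) - 1 - 1)) • fderiv ℝ a x
        + (a x ^ (-(L.length : ℤ) - 1)) • D)) x := by
    have := ((hD.mul hZ).const_mul c)
    exact this
  have hpd : pd i (TF a (c, L)) x =
      (((c : ℝ) • ((L.map (fun μ => Dmu μ a x)).prod •
          (((-(L.length : ℤ) - 1 : ℤ) : ℝ) * a x ^ (-(L.length : ℤ) - 1 - 1)) • fderiv ℝ a x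
        + (a x ^ (-(L.length : ℤ) - 1)) • D)) : E M →L[ℝ] ℝ) (EuclideanSpace.single i 1) := by
    rw [pd, hTF.fderiv]
  rw [hpd]
  have hfda : (fderiv ℝ a x) (EuclideanSpace.single i 1) = Dmu [i] a x := rfl
  simp only [ContinuousLinearMap.add_apply, ContinuousLinearMap.smul_apply, smul_eq_mul,
    hfda, hDe, stepT, List.map_cons, List.sum_cons, List.map_map]
  rw [show ((mods i L).map ((fun t => TF a t x) ∘ (fun L' => (c, L'))))
      = (mods i L).map (fun L' => c * ((L'.map (fun μ => Dmu μ a x)).prod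
          * a x ^ (-(L.length : ℤ) - 1))) from
    List.map_congr_left (fun L' hL' => by
      simp only [Function.comp, TF]
      rw [(mods_mem hL').1])]
  rw [show (mods i L).map (fun L' => c * ((L'.map (fun μ => Dmu μ a x)).prod
          * a x ^ (-(L.length : ℤ) - 1)))
      = (mods i L).map (fun L' => (c * a x ^ (-(L.length : ℤ) - 1)) *
          (L'.map (fun μ => Dmu μ a x)).prod) from
    List.map_congr_left (fun L' _ => by ring)]
  rw [sum_map_mul_left']
  simp only [TF, List.map_cons, List.prod_cons, List.length_cons]
  have hexp : (-((L.length : ℤ) + 1) - 1) = (-(L.length : ℤ) - 1) - 1 := by ring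
  push_cast
  rw [hexp]
  ring

lemma diffAt_sumTF (a : E M → ℝ) (x : E M) (T : List (ℝ × List (List (Fin M))))
    (h : ∀ t ∈ T, DifferentiableAt ℝ (TF a t) x) :
    DifferentiableAt ℝ (fun y => (T.map (fun t => TF a t y)).sum) x := by
  induction T with
  | nil => simpa using differentiableAt_const (0:ℝ)
  | cons t T ih =>
      exact (h t (List.mem_cons_self)).add
        (ih (fun s hs => h s (List.mem_cons_of_mem _ hs)))

lemma pd_sumTF (a : E M → ℝ) (x : E M) (i : Fin M) (T : List (ℝ × List (List (Fin M))))
    (h : ∀ t ∈ T, DifferentiableAt ℝ (TF a t) x) :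
    pd i (fun y => (T.map (fun t => TF a t y)).sum) x
      = (T.map (fun t => pd i (TF a t) x)).sum := by
  induction T with
  | nil => simp [pd]
  | cons t T ih =>
      have h1 := h t (List.mem_cons_self)
      have h2 := diffAt_sumTF a x T (fun s hs => h s (List.mem_cons_of_mem _ hs))
      have hfun : (fun y => (((t :: T)).map (fun s => TF a s y)).sum)
          = fun y => TF a t y + (T.map (fun s => TF a s y)).sum := by
        funext y; simp
      conv_rhs => rw [List.map_cons, List.sum_cons]
      rw [← ih (fun s hs => h s (List.mem_cons_of_mem _ hs)), hfun]
      simp only [pd]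
      rw [fderiv_fun_add h1 h2]
      simp

lemma sum_flatMap {α β : Type*} (l : List α) (f : α → List β) (g : β → ℝ) :
    ((l.flatMap f).map g).sum = (l.map (fun t => ((f t).map g).sum)).sum := by
  induction l with
  | nil => simp
  | cons t l ih => simp [List.flatMap_cons, ih]

lemma le_sum_of_mem {l : List ℕ} {n : ℕ} (h : n ∈ l) : n ≤ l.sum := by
  induction l with
  | nil => simp at h
  | cons m l ih =>
      rcases List.mem_cons.1 h with rfl | h
      · simp
      · have := ih h; simp only [List.sum_cons]; omega

lemma len_le_sum (L : List (List (Fin M))) (h : ∀ μ ∈ L, 1 ≤ μ.length) :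
    L.length ≤ (L.map List.length).sum := by
  induction L with
  | nil => simp
  | cons μ L ih =>
      simp only [List.length_cons, List.map_cons, List.sum_cons]
      have h1 := h μ (List.mem_cons_self)
      have h2 := ih (fun ν hν => h ν (List.mem_cons_of_mem _ hν))
      omega

def Inv (n : ℕ) (t : ℝ × List (List (Fin M))) : Prop :=
  |t.1| ≤ 5 ^ n ∧ (t.2.map List.length).sum ≤ n ∧ (∀ μ ∈ t.2, 1 ≤ μ.length) ∧
    (1 ≤ n → 1 ≤ t.2.length)

lemma rep (a : E M → ℝ) (hC : ContDiff ℝ (4:ℕ) a) (h0 : ∀ x, 0 < a x) :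
    ∀ γ : List (Fin M), γ.length ≤ 4 →
    ∃ T : List (ℝ × List (List (Fin M))),
      T.length ≤ 4 ^ γ.length ∧ (∀ t ∈ T, Inv γ.length t) ∧
      ∀ x, Dmu γ (fun y => 1 / a y) x = (T.map (fun t => TF a t x)).sum := by
  intro γ
  induction γ with
  | nil =>
      intro _
      refine ⟨[(1, [])], by simp, ?_, ?_⟩
      · intro t ht
        simp only [List.mem_singleton] at ht
        subst ht
        exact ⟨by simp, by simp, by simp, fun h => h⟩
      · intro x
        simp [TF, Dmu, one_div, zpow_neg, zpow_one]
  | cons i γ ih =>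
      intro hlen
      have hγ : γ.length ≤ 3 := by simp at hlen; omega
      obtain ⟨T, hTlen, hTinv, hTeq⟩ := ih (by omega)
      have hdiffa : Differentiable ℝ a :=
        hC.differentiable (by simp)
      have hdiffT : ∀ x, ∀ t ∈ T, DifferentiableAt ℝ (TF a t) x := by
        intro x t ht
        refine diffAt_TF a x (hdiffa x) (h0 x).ne' t ?_
        intro μ hμ
        have h1 : μ.length ≤ (t.2.map List.length).sum :=
          le_sum_of_mem (List.mem_map_of_mem hμ)
        exact (diff_Dmu a hC μ (by have := (hTinv t ht).2.1; omega)) x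
      refine ⟨T.flatMap (stepT i), ?_, ?_, ?_⟩
      · have : ∀ t ∈ T, (stepT i t).length ≤ 4 := by
          intro t ht
          have h2 := (hTinv t ht).2.1
          have h3 := len_le_sum t.2 (hTinv t ht).2.2.1
          simp [stepT, mods_length]
          omega
        calc (T.flatMap (stepT i)).length = (T.map (List.length ∘ stepT i)).sum :=
              List.length_flatMap
          _ ≤ (T.map (fun _ => 4)).sum := by
              apply List.sum_le_sum
              intro t ht
              exact this t ht
          _ = 4 * T.length := by simp [List.map_const]; ring
          _ ≤ 4 * 4 ^ γ.length := by omega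
          _ = 4 ^ (i :: γ).length := by simp [pow_succ]; ring
      · intro t' ht'
        obtain ⟨t, ht, hst⟩ := List.mem_flatMap.1 ht'
        obtain ⟨hc, hsum, hone, hlen1⟩ := hTinv t ht
        have hjn : t.2.length ≤ γ.length := by
          have h3 := len_le_sum t.2 hone
          omega
        rcases List.mem_cons.1 hst with rfl | hmem
        · refine ⟨?_, by simp; omega, ?_, by simp⟩
          · have habs : |t.1 * (-(t.2.length : ℝ) - 1)| = |t.1| * ((t.2.length : ℝ) + 1) := by
              rw [abs_mul]
              congr 1
              rw [show (-(t.2.length : ℝ) - 1) = -((t.2.length : ℝ) + 1) by ring, abs_neg,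
                abs_of_nonneg (by positivity)]
            have hl5 : (t.2.length : ℝ) + 1 ≤ 5 := by
              have h5 : t.2.length + 1 ≤ 5 := by omega
              exact_mod_cast h5
            calc |(t.1 * (-(t.2.length : ℝ) - 1), [i] :: t.2).1|
                = |t.1| * ((t.2.length : ℝ) + 1) := habs
              _ ≤ 5 ^ γ.length * 5 :=
                  mul_le_mul hc hl5 (by positivity) (by positivity)
              _ = 5 ^ (i :: γ).length := by rw [List.length_cons, pow_succ]
          · intro ν hν
            rcases List.mem_cons.1 hν with rfl | hν
            · simp
            · exact hone ν hν
        · obtain ⟨L', hL', rfl⟩ := List.mem_map.1 hmem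
          obtain ⟨hl1, hl2, hl3⟩ := mods_mem hL'
          have hc5 : (5:ℝ) ^ γ.length ≤ 5 ^ (i :: γ).length := by
            apply pow_le_pow_right₀ (by norm_num)
            simp
          refine ⟨le_trans hc hc5, by simp [hl2]; omega, ?_, ?_⟩
          · intro ν hν
            obtain ⟨μ, hμ, hor⟩ := hl3 ν hν
            rcases hor with rfl | rfl
            · exact hone ν hμ
            · simp
          · intro _
            rw [hl1]
            rcases Nat.eq_zero_or_pos t.2.length with hz | hp
            · exfalso
              have : t.2 = [] := List.length_eq_zero_iff.mp hz
              rw [this] at hL'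
              simp [mods] at hL'
            · omega
      · intro x
        have : Dmu (i :: γ) (fun y => 1 / a y) = pd i (Dmu γ (fun y => 1 / a y)) := rfl
        rw [this]
        have heq : Dmu γ (fun y => 1 / a y) = fun y => (T.map (fun t => TF a t y)).sum :=
          funext hTeq
        rw [heq, pd_sumTF a x i T (hdiffT x)]
        rw [sum_flatMap]
        congr 1
        apply List.map_congr_left
        intro t ht
        have := pd_TF a x (hdiffa x) (h0 x).ne' i t.1 t.2 (fun μ hμ => by
          have h1 : μ.length ≤ (t.2.map List.length).sum :=
            le_sum_of_mem (List.mem_map_of_mem hμ)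
          have := (hTinv t ht).2.1
          exact diff_Dmu a hC μ (by omega) x)
        simpa using this

lemma abs_list_sum (l : List ℝ) : |l.sum| ≤ (l.map abs).sum := by
  induction l with
  | nil => simp
  | cons y l ih =>
      simp only [List.sum_cons, List.map_cons]
      exact (abs_add_le _ _).trans (by gcongr)

section Bound
variable (ε δ' K : ℝ) (a : E M → ℝ) (x : E M)
variable (hε0 : 1 / 4 ≤ ε) (hε1 : ε < 1) (hδ'0 : 0 < δ') (hδ'1 : δ' < 1) (hK : 0 < K)
variable (ha0 : 0 < a x) (ha1 : a x ≤ 1)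
variable (hder : ∀ (μ : List (Fin M)), 1 ≤ μ.length → μ.length ≤ 4 →
    |Dmu μ a x| ≤ K * a x ^ (max (1 - (μ.length : ℝ) * ε) 0 + δ'))

include hδ'0 hK ha0 ha1 hder in
lemma prod_bound : ∀ (L : List (List (Fin M))), (∀ μ ∈ L, 1 ≤ μ.length ∧ μ.length ≤ 4) →
    |(L.map (fun μ => Dmu μ a x)).prod| ≤
      K ^ L.length * a x ^ ((L.length : ℝ) * (1 + δ') - ((L.map List.length).sum : ℝ) * ε) := by
  intro L
  induction L with
  | nil => simp [Real.rpow_zero]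
  | cons μ L ih =>
      intro h
      have hrest := ih (fun ν hν => h ν (List.mem_cons_of_mem _ hν))
      have hμ1 := (h μ (List.mem_cons_self)).1
      have hμ4 := (h μ (List.mem_cons_self)).2
      have hμb : |Dmu μ a x| ≤ K * a x ^ (1 - (μ.length : ℝ) * ε + δ') := by
        refine (hder μ hμ1 hμ4).trans ?_
        have : a x ^ (max (1 - (μ.length : ℝ) * ε) 0 + δ')
            ≤ a x ^ (1 - (μ.length : ℝ) * ε + δ') :=
          Real.rpow_le_rpow_of_exponent_ge ha0 ha1 (by gcongr; exact le_max_left _ _)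
        nlinarith [this]
      calc |(((μ :: L).map (fun μ => Dmu μ a x)).prod)|
          = |Dmu μ a x| * |(L.map (fun μ => Dmu μ a x)).prod| := by
            simp [abs_mul]
        _ ≤ (K * a x ^ (1 - (μ.length : ℝ) * ε + δ')) *
              (K ^ L.length *
                a x ^ ((L.length : ℝ) * (1 + δ') - ((L.map List.length).sum : ℝ) * ε)) := by
            apply mul_le_mul hμb hrest (abs_nonneg _)
            positivity
        _ = K ^ (μ :: L).length * (a x ^ (1 - (μ.length : ℝ) * ε + δ') *
              a x ^ ((L.length : ℝ) * (1 + δ') - ((L.map List.length).sum : ℝ) * ε)) := by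
            simp [pow_succ]; ring
        _ = K ^ (μ :: L).length * a x ^ (((μ :: L).length : ℝ) * (1 + δ')
              - (((μ :: L).map List.length).sum : ℝ) * ε) := by
            rw [← Real.rpow_add ha0]
            congr 1
            have e1 : ((((μ :: L).map List.length).sum : ℕ) : ℝ)
                = (μ.length : ℝ) + ((L.map List.length).sum : ℝ) := by
              simp
            have e2 : (((μ :: L).length : ℕ) : ℝ) = (L.length : ℝ) + 1 := by
              simp
            rw [e1, e2]
            ring

include hε0 hδ'0 hK ha0 ha1 hder in
lemma TF_bound (n : ℕ) (hn1 : 1 ≤ n) (hn4 : n ≤ 4) (t : ℝ × List (List (Fin M)))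
    (hc : |t.1| ≤ 5 ^ n) (hsum : (t.2.map List.length).sum ≤ n)
    (hone : ∀ μ ∈ t.2, 1 ≤ μ.length) (hlen1 : 1 ≤ t.2.length) :
    |TF a t x| ≤ 5 ^ 4 * (max 1 K) ^ 4 * a x ^ (-1 - (n : ℝ) * ε + δ') := by
  obtain ⟨c, L⟩ := t
  simp only at hc hsum hone hlen1
  have hL4 : ∀ μ ∈ L, 1 ≤ μ.length ∧ μ.length ≤ 4 := by
    intro μ hμ
    have := le_sum_of_mem (List.mem_map_of_mem (f := List.length) hμ)
    exact ⟨hone μ hμ, by omega⟩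
  have hj : L.length ≤ n := le_trans (len_le_sum L hone) hsum
  have hzp : (a x : ℝ) ^ (-(L.length : ℤ) - 1) = a x ^ (-(L.length : ℝ) - 1) := by
    rw [← Real.rpow_intCast]
    congr 1
    push_cast
    ring
  have h1 : |TF a (c, L) x| ≤ |c| * ((K ^ L.length *
      a x ^ ((L.length : ℝ) * (1 + δ') - ((L.map List.length).sum : ℝ) * ε)) *
      a x ^ (-(L.length : ℝ) - 1)) := by
    rw [TF, abs_mul, abs_mul]
    apply mul_le_mul_of_nonneg_left _ (abs_nonneg _)
    rw [hzp, abs_of_nonneg (by positivity : (0:ℝ) ≤ a x ^ (-(L.length : ℝ) - 1))]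
    apply mul_le_mul_of_nonneg_right _ (by positivity)
    exact prod_bound ε δ' K a x hδ'0 hK ha0 ha1 hder L hL4
  have h2 : (K ^ L.length *
        a x ^ ((L.length : ℝ) * (1 + δ') - ((L.map List.length).sum : ℝ) * ε)) *
      a x ^ (-(L.length : ℝ) - 1)
      = K ^ L.length *
        a x ^ (-1 - (((L.map List.length).sum : ℝ)) * ε + (L.length : ℝ) * δ') := by
    rw [mul_assoc, ← Real.rpow_add ha0]
    congr 2
    ring
  rw [h2] at h1
  have h3 : a x ^ (-1 - (((L.map List.length).sum : ℝ)) * ε + (L.length : ℝ) * δ')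
      ≤ a x ^ (-1 - (n : ℝ) * ε + δ') := by
    apply Real.rpow_le_rpow_of_exponent_ge ha0 ha1
    have hs : ((L.map List.length).sum : ℝ) ≤ (n : ℝ) := by exact_mod_cast hsum
    have hl1 : (1 : ℝ) ≤ (L.length : ℝ) := by exact_mod_cast hlen1
    have hε' : (0 : ℝ) ≤ ε := by linarith
    nlinarith
  have h4 : K ^ L.length ≤ (max 1 K) ^ 4 := by
    calc K ^ L.length ≤ (max 1 K) ^ L.length :=
          pow_le_pow_left₀ hK.le (le_max_right _ _) _
      _ ≤ (max 1 K) ^ 4 := pow_le_pow_right₀ (le_max_left _ _) (by omega)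
  have hc5 : |c| ≤ (5:ℝ) ^ 4 := le_trans hc (by
    apply pow_le_pow_right₀ (by norm_num) hn4)
  calc |TF a (c, L) x| ≤ |c| * (K ^ L.length *
        a x ^ (-1 - (((L.map List.length).sum : ℝ)) * ε + (L.length : ℝ) * δ')) := h1
    _ ≤ 5 ^ 4 * ((max 1 K) ^ 4 * a x ^ (-1 - (n : ℝ) * ε + δ')) := by
        apply mul_le_mul hc5 _ (by positivity) (by positivity)
        apply mul_le_mul h4 h3 (by positivity) (by positivity)
    _ = 5 ^ 4 * (max 1 K) ^ 4 * a x ^ (-1 - (n : ℝ) * ε + δ') := by ring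

end Bound
end Stmt9Aux

theorem stmt_9 {M : ℕ} (hM : 1 ≤ M) (ε δ' K : ℝ)
    (hε0 : 1 / 4 ≤ ε) (hε1 : ε < 1) (hδ'0 : 0 < δ') (hδ'1 : δ' < 1) (hK : 0 < K)
    (a : E M → ℝ) (ha0 : ∀ x, 0 < a x) (ha1 : ∀ x, a x ≤ 1)
    (haC4 : ContDiff ℝ 4 a)
    (hder : ∀ (μ : List (Fin M)) (x : E M), 1 ≤ μ.length → μ.length ≤ 4 →
        |Dmu μ a x| ≤ K * a x ^ (max (1 - (μ.length : ℝ) * ε) 0 + δ')) :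
    ∃ C : ℝ, 0 < C ∧ ∀ (γ : List (Fin M)) (x : E M), 1 ≤ γ.length → γ.length ≤ 4 →
        |Dmu γ (fun y => 1 / a y) x| ≤ C * a x ^ (-1 - (γ.length : ℝ) * ε + δ') := by
  have haC4' : ContDiff ℝ (4:ℕ) a := by exact_mod_cast haC4
  refine ⟨4 ^ 4 * (5 ^ 4 * (max 1 K) ^ 4), by positivity, ?_⟩
  intro γ x h1 h4
  obtain ⟨T, hTlen, hTinv, hTeq⟩ := Stmt9Aux.rep a haC4' ha0 γ h4
  rw [hTeq x]
  have hB : ∀ t ∈ T, |Stmt9Aux.TF a t x| ≤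
      5 ^ 4 * (max 1 K) ^ 4 * a x ^ (-1 - (γ.length : ℝ) * ε + δ') := by
    intro t ht
    obtain ⟨hc, hsum, hone, hlen1⟩ := hTinv t ht
    exact Stmt9Aux.TF_bound ε δ' K a x hε0 hδ'0 hK (ha0 x) (ha1 x) (fun μ hμ1 hμ4 =>
      hder μ x hμ1 hμ4) γ.length h1 h4 t hc hsum hone (hlen1 h1)
  calc |(T.map (fun t => Stmt9Aux.TF a t x)).sum|
      ≤ ((T.map (fun t => Stmt9Aux.TF a t x)).map abs).sum := Stmt9Aux.abs_list_sum _
    _ ≤ ((T.map (fun t => Stmt9Aux.TF a t x)).map abs).length •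
          (5 ^ 4 * (max 1 K) ^ 4 * a x ^ (-1 - (γ.length : ℝ) * ε + δ')) := by
        apply List.sum_le_card_nsmul
        intro y hy
        obtain ⟨z, hz, rfl⟩ := List.mem_map.1 hy
        obtain ⟨t, ht, rfl⟩ := List.mem_map.1 hz
        exact hB t ht
    _ ≤ 4 ^ 4 * (5 ^ 4 * (max 1 K) ^ 4) * a x ^ (-1 - (γ.length : ℝ) * ε + δ') := by
        rw [nsmul_eq_mul]
        simp only [List.length_map]
        have hT4 : (T.length : ℝ) ≤ 4 ^ 4 := by
          have : T.length ≤ 4 ^ 4 :=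
            le_trans hTlen (Nat.pow_le_pow_right (by norm_num) h4)
          exact_mod_cast this
        have hnn : (0:ℝ) ≤ 5 ^ 4 * (max 1 K) ^ 4 * a x ^ (-1 - (γ.length : ℝ) * ε + δ') := by
          have := ha0 x
          positivity
        nlinarith
end
end

section
/- For every real λ > 0 and every (x, y, z) ∈ ℝ³ with (x, y, z) ≠ (0, 0, 0), the matrix Q_λ(x, y, z) is positive definite. -/
open Matrix

noncomputable def Qlam (l x y z : ℝ) : Matrix (Fin 3) (Fin 3) ℝ :=
  !![x ^ 2 + l * y ^ 2 + 2 * z ^ 2, -(x * y), -(x * z);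
     -(x * y), y ^ 2 + l * z ^ 2 + 2 * x ^ 2, -(y * z);
     -(x * z), -(y * z), z ^ 2 + l * x ^ 2 + 2 * y ^ 2]

/-- LDL-style positivity of a 3×3 symmetric quadratic form with positive leading minors. -/
lemma quadform_pos (p q r s t u a b c : ℝ)
    (hd1 : 0 < p) (hd2 : 0 < p * s - q ^ 2)
    (hd3 : 0 < p * s * u - p * t ^ 2 - q ^ 2 * u + 2 * q * t * r - s * r ^ 2)
    (h : ¬(a = 0 ∧ b = 0 ∧ c = 0)) :
    0 < a * (p * a + q * b + r * c) + b * (q * a + s * b + t * c)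
      + c * (r * a + t * b + u * c) := by
  have key : p * (p * s - q ^ 2) *
      (a * (p * a + q * b + r * c) + b * (q * a + s * b + t * c)
        + c * (r * a + t * b + u * c))
      = (p * s - q ^ 2) * (p * a + q * b + r * c) ^ 2
        + ((p * s - q ^ 2) * b + (p * t - q * r) * c) ^ 2
        + p * (p * s * u - p * t ^ 2 - q ^ 2 * u + 2 * q * t * r - s * r ^ 2) * c ^ 2 := by
    ring
  have hK : 0 < p * (p * s - q ^ 2) := mul_pos hd1 hd2
  have hRHS : 0 < (p * s - q ^ 2) * (p * a + q * b + r * c) ^ 2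
      + ((p * s - q ^ 2) * b + (p * t - q * r) * c) ^ 2
      + p * (p * s * u - p * t ^ 2 - q ^ 2 * u + 2 * q * t * r - s * r ^ 2) * c ^ 2 := by
    by_cases hc : c = 0
    · subst hc
      by_cases hb : b = 0
      · subst hb
        have ha : a ≠ 0 := by tauto
        have ha2 : 0 < a ^ 2 := by positivity
        nlinarith [mul_pos hd2 (mul_pos (mul_pos hd1 hd1) ha2)]
      · have hb2 : 0 < b ^ 2 := by positivity
        nlinarith [mul_pos (mul_pos hd2 hd2) hb2,
          mul_nonneg hd2.le (sq_nonneg (p * a + q * b))]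
    · have hc2 : 0 < c ^ 2 := by positivity
      nlinarith [mul_pos (mul_pos hd1 hd3) hc2,
        mul_nonneg hd2.le (sq_nonneg (p * a + q * b + r * c)),
        sq_nonneg ((p * s - q ^ 2) * b + (p * t - q * r) * c)]
  have hQ : 0 < p * (p * s - q ^ 2) *
      (a * (p * a + q * b + r * c) + b * (q * a + s * b + t * c)
        + c * (r * a + t * b + u * c)) := key ▸ hRHS
  by_contra hcon
  push_neg at hcon
  have h1 : p * (p * s - q ^ 2) *
      (a * (p * a + q * b + r * c) + b * (q * a + s * b + t * c)
        + c * (r * a + t * b + u * c)) ≤ 0 :=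
    mul_nonpos_iff.mpr (Or.inl ⟨hK.le, hcon⟩)
  exact absurd hQ (not_lt.mpr h1)

theorem stmt_10 (l : ℝ) (hl : 0 < l) (x y z : ℝ) (h : ¬(x = 0 ∧ y = 0 ∧ z = 0)) :
    (Qlam l x y z).PosDef := by
  have hpos : 0 < x ^ 2 ∨ 0 < y ^ 2 ∨ 0 < z ^ 2 := by
    rcases not_and_or.mp h with hx | h'
    · exact Or.inl (by positivity)
    rcases not_and_or.mp h' with hy | hz
    · exact Or.inr (Or.inl (by positivity))
    · exact Or.inr (Or.inr (by positivity))
  have hd1 : 0 < x ^ 2 + l * y ^ 2 + 2 * z ^ 2 := by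
    rcases hpos with hx | hy | hz
    · nlinarith [mul_nonneg hl.le (sq_nonneg y), sq_nonneg z]
    · nlinarith [mul_pos hl hy, sq_nonneg x, sq_nonneg z]
    · nlinarith [mul_nonneg hl.le (sq_nonneg y), sq_nonneg x]
  have hd2 : 0 < (x ^ 2 + l * y ^ 2 + 2 * z ^ 2) * (y ^ 2 + l * z ^ 2 + 2 * x ^ 2)
      - (-(x * y)) ^ 2 := by
    have key2 : (x ^ 2 + l * y ^ 2 + 2 * z ^ 2) * (y ^ 2 + l * z ^ 2 + 2 * x ^ 2)
        - (-(x * y)) ^ 2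
        = 2 * (y*z) ^ 2 + 4 * (x*z) ^ 2 + 2 * (x^2 * x^2) + 2 * (l * (z*z)^2)
          + l * (y*y)^2 + l * (x*z)^2 + 2 * (l * (x*y)^2) + l * (l * (y*z)^2) := by
      ring
    rw [key2]
    have A1 := sq_nonneg (y*z); have A2 := sq_nonneg (x*z)
    have B1 := mul_nonneg hl.le (sq_nonneg (z*z))
    have B2 := mul_nonneg hl.le (sq_nonneg (y*y))
    have B3 := mul_nonneg hl.le (sq_nonneg (x*z))
    have B4 := mul_nonneg hl.le (sq_nonneg (x*y))
    have B5 := mul_nonneg hl.le (mul_nonneg hl.le (sq_nonneg (y*z)))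
    rcases hpos with hx | hy | hz
    · have := mul_pos hx hx
      linarith
    · have := mul_pos hl (mul_pos hy hy)
      have hyy : 0 < l * (y*y)^2 := by linarith
      linarith [mul_nonneg (sq_nonneg x) (sq_nonneg x)]
    · have := mul_pos hl (mul_pos hz hz)
      have hzz : 0 < l * (z*z)^2 := by linarith
      linarith [mul_nonneg (sq_nonneg x) (sq_nonneg x)]
  have hd3 : 0 < (x ^ 2 + l * y ^ 2 + 2 * z ^ 2) * (y ^ 2 + l * z ^ 2 + 2 * x ^ 2)
        * (z ^ 2 + l * x ^ 2 + 2 * y ^ 2)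
      - (x ^ 2 + l * y ^ 2 + 2 * z ^ 2) * (-(y * z)) ^ 2
      - (-(x * y)) ^ 2 * (z ^ 2 + l * x ^ 2 + 2 * y ^ 2)
      + 2 * (-(x * y)) * (-(y * z)) * (-(x * z))
      - (y ^ 2 + l * z ^ 2 + 2 * x ^ 2) * (-(x * z)) ^ 2 := by
    have key3 : (x ^ 2 + l * y ^ 2 + 2 * z ^ 2) * (y ^ 2 + l * z ^ 2 + 2 * x ^ 2)
          * (z ^ 2 + l * x ^ 2 + 2 * y ^ 2)
        - (x ^ 2 + l * y ^ 2 + 2 * z ^ 2) * (-(y * z)) ^ 2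
        - (-(x * y)) ^ 2 * (z ^ 2 + l * x ^ 2 + 2 * y ^ 2)
        + 2 * (-(x * y)) * (-(y * z)) * (-(x * z))
        - (y ^ 2 + l * z ^ 2 + 2 * x ^ 2) * (-(x * z)) ^ 2
        = 4 * (y*y*z) ^ 2 + 4 * (x*z*z) ^ 2 + 4 * (x*y*z) ^ 2 + 4 * (x*x*y) ^ 2
          + 2 * (l * (z*z*z) ^ 2) + 4 * (l * (y*z*z) ^ 2) + 2 * (l * (y*y*y) ^ 2)
          + 6 * (l * (x*y*z) ^ 2) + 4 * (l * (x*y*y) ^ 2) + 4 * (l * (x*x*z) ^ 2)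
          + 2 * (l * (x*x*x) ^ 2)
          + (l * (l * (y*z*z) ^ 2)) + 2 * (l * (l * (y*y*z) ^ 2))
          + 2 * (l * (l * (x*z*z) ^ 2)) + (l * (l * (x*y*y) ^ 2))
          + (l * (l * (x*x*z) ^ 2)) + 2 * (l * (l * (x*x*y) ^ 2))
          + l * (l * (l * (x*y*z) ^ 2)) := by
      ring
    rw [key3]
    have H1 := sq_nonneg (y*y*z); have H2 := sq_nonneg (x*z*z)
    have H3 := sq_nonneg (x*y*z); have H4 := sq_nonneg (x*x*y)
    have L1 := mul_nonneg hl.le (sq_nonneg (z*z*z))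
    have L2 := mul_nonneg hl.le (sq_nonneg (y*z*z))
    have L3 := mul_nonneg hl.le (sq_nonneg (y*y*y))
    have L4 := mul_nonneg hl.le (sq_nonneg (x*y*z))
    have L5 := mul_nonneg hl.le (sq_nonneg (x*y*y))
    have L6 := mul_nonneg hl.le (sq_nonneg (x*x*z))
    have L7 := mul_nonneg hl.le (sq_nonneg (x*x*x))
    have M1 := mul_nonneg hl.le (mul_nonneg hl.le (sq_nonneg (y*z*z)))
    have M2 := mul_nonneg hl.le (mul_nonneg hl.le (sq_nonneg (y*y*z)))
    have M3 := mul_nonneg hl.le (mul_nonneg hl.le (sq_nonneg (x*z*z)))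
    have M4 := mul_nonneg hl.le (mul_nonneg hl.le (sq_nonneg (x*y*y)))
    have M5 := mul_nonneg hl.le (mul_nonneg hl.le (sq_nonneg (x*x*z)))
    have M6 := mul_nonneg hl.le (mul_nonneg hl.le (sq_nonneg (x*x*y)))
    have N := mul_nonneg hl.le (mul_nonneg hl.le (mul_nonneg hl.le (sq_nonneg (x*y*z))))
    rcases hpos with hx | hy | hz
    · have hx3 : 0 < l * (x*x*x) ^ 2 := by linarith [mul_pos hl (mul_pos (mul_pos hx hx) hx)]
      linarith
    · have hy3 : 0 < l * (y*y*y) ^ 2 := by linarith [mul_pos hl (mul_pos (mul_pos hy hy) hy)]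
      linarith
    · have hz3 : 0 < l * (z*z*z) ^ 2 := by linarith [mul_pos hl (mul_pos (mul_pos hz hz) hz)]
      linarith
  constructor
  · ext i j
    fin_cases i <;> fin_cases j <;> simp [Qlam, Matrix.conjTranspose_apply]
  · intro v hv
    have hv' : ¬(v 0 = 0 ∧ v 1 = 0 ∧ v 2 = 0) := by
      rintro ⟨h0, h1, h2⟩
      apply hv
      ext i
      fin_cases i <;> simp [h0, h1, h2]
    have key := quadform_pos (x ^ 2 + l * y ^ 2 + 2 * z ^ 2) (-(x * y)) (-(x * z))
      (y ^ 2 + l * z ^ 2 + 2 * x ^ 2) (-(y * z)) (z ^ 2 + l * x ^ 2 + 2 * y ^ 2)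
      (v 0) (v 1) (v 2) hd1 hd2 hd3 hv'
    simp [Qlam, dotProduct, Matrix.mulVec, Finsupp.sum_fintype, Fin.sum_univ_three]
    linarith [key]
end

section
/- Let 0 < λ < 2/81. Then there do not exist a positive integer L and real 3×3 matrices M₁, …, M_L such that, with v^ℓ(x, y) = M_ℓ·(x, y, 1)ᵀ ∈ ℝ³, the identity Q_λ(x, y, 1) = Σ_{ℓ=1}^{L} v^ℓ(x, y) v^ℓ(x, y)ᵀ holds for all (x, y) ∈ ℝ². In particular, Q_λ cannot be written as a finite sum of squares of linear (matrix-coefficient) forms: there are no linear maps w^ℓ : ℝ³ → ℝ³ with Q_λ(W) = Σ_{ℓ=1}^{L} w^ℓ(W) w^ℓ(W)ᵀ for all W ∈ ℝ³. -/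
open Matrix

/-- extract a coefficient as a combination of two evaluations -/
lemma comb2 {L : ℕ} (f1 f2 g : Fin L → ℝ) (r1 r2 : ℝ)
    (hf1 : ∑ ℓ, f1 ℓ = r1) (hf2 : ∑ ℓ, f2 ℓ = r2)
    (hg : ∀ ℓ, 2 * g ℓ = f1 ℓ - f2 ℓ) :
    ∑ ℓ, g ℓ = (r1 - r2) / 2 := by
  have h : 2 * ∑ ℓ, g ℓ = ∑ ℓ, f1 ℓ - ∑ ℓ, f2 ℓ := by
    rw [Finset.mul_sum, ← Finset.sum_sub_distrib]
    exact Finset.sum_congr rfl fun ℓ _ => hg ℓ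
  rw [hf1, hf2] at h
  linarith

lemma comb3 {L : ℕ} (f1 f2 f3 g : Fin L → ℝ) (r1 r2 r3 : ℝ)
    (hf1 : ∑ ℓ, f1 ℓ = r1) (hf2 : ∑ ℓ, f2 ℓ = r2) (hf3 : ∑ ℓ, f3 ℓ = r3)
    (hg : ∀ ℓ, 2 * g ℓ = f1 ℓ + f2 ℓ - 2 * f3 ℓ) :
    ∑ ℓ, g ℓ = (r1 + r2 - 2 * r3) / 2 := by
  have h : 2 * ∑ ℓ, g ℓ = (∑ ℓ, f1 ℓ + ∑ ℓ, f2 ℓ) - 2 * ∑ ℓ, f3 ℓ := by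
    rw [Finset.mul_sum, Finset.mul_sum, ← Finset.sum_add_distrib, ← Finset.sum_sub_distrib]
    exact Finset.sum_congr rfl fun ℓ _ => hg ℓ
  rw [hf1, hf2, hf3] at h
  linarith

lemma comb4 {L : ℕ} (f1 f2 f3 f4 g : Fin L → ℝ) (r1 r2 r3 r4 : ℝ)
    (hf1 : ∑ ℓ, f1 ℓ = r1) (hf2 : ∑ ℓ, f2 ℓ = r2) (hf3 : ∑ ℓ, f3 ℓ = r3)
    (hf4 : ∑ ℓ, f4 ℓ = r4)
    (hg : ∀ ℓ, 4 * g ℓ = f1 ℓ - f2 ℓ - f3 ℓ + f4 ℓ) :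
    ∑ ℓ, g ℓ = (r1 - r2 - r3 + r4) / 4 := by
  have h : 4 * ∑ ℓ, g ℓ = (∑ ℓ, f1 ℓ - ∑ ℓ, f2 ℓ - ∑ ℓ, f3 ℓ) + ∑ ℓ, f4 ℓ := by
    rw [Finset.mul_sum, ← Finset.sum_sub_distrib, ← Finset.sum_sub_distrib,
      ← Finset.sum_add_distrib]
    exact Finset.sum_congr rfl fun ℓ _ => hg ℓ
  rw [hf1, hf2, hf3, hf4] at h
  linarith

lemma final_contra (l s t r : ℝ) (h2 : l < 2 / 81)
    (hs2 : s ^ 2 ≤ 2 * l) (ht2 : t ^ 2 ≤ 2 * l) (hr2 : r ^ 2 ≤ 2 * l)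
    (hpos : (0:ℝ) ≤ 1 + 1 + 1 + 2 * (-1 - s) + 2 * (-1 - t) + 2 * (-1 - r)) : False := by
  nlinarith [sq_nonneg (2 * s + 1), sq_nonneg (2 * t + 1), sq_nonneg (2 * r + 1)]

set_option maxHeartbeats 2000000 in
lemma no_sos (l : ℝ) (h1 : 0 < l) (h2 : l < 2 / 81) :
    ¬ ∃ (L : ℕ) (Mv : Fin L → Matrix (Fin 3) (Fin 3) ℝ), 0 < L ∧ ∀ x y : ℝ,
        Qlam l x y 1 = ∑ ℓ, vecMulVec (Mv ℓ *ᵥ ![x, y, 1]) (Mv ℓ *ᵥ ![x, y, 1]) := by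
  rintro ⟨L, Mv, -, h⟩
  set a : Fin 3 → Fin L → ℝ := fun i ℓ => Mv ℓ i 0 with ha
  set b : Fin 3 → Fin L → ℝ := fun i ℓ => Mv ℓ i 1 with hb
  set c : Fin 3 → Fin L → ℝ := fun i ℓ => Mv ℓ i 2 with hc
  have key : ∀ (x y : ℝ) (i j : Fin 3), Qlam l x y 1 i j =
      ∑ ℓ, (a i ℓ * x + b i ℓ * y + c i ℓ) * (a j ℓ * x + b j ℓ * y + c j ℓ) := by
    intro x y i j
    have hq := congrFun (congrFun (h x y) i) j
    simp only [Matrix.sum_apply, vecMulVec_apply, mulVec, dotProduct, Fin.sum_univ_three,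
      Matrix.cons_val_zero, Matrix.cons_val_one, Matrix.head_cons, Matrix.cons_val_two,
      Matrix.tail_cons] at hq
    rw [hq]
    exact Finset.sum_congr rfl fun ℓ _ => by simp only [ha, hb, hc]; ring
  -- evaluated versions
  have E : ∀ (x y : ℝ) (i j : Fin 3) (r : ℝ), Qlam l x y 1 i j = r →
      ∑ ℓ, (a i ℓ * x + b i ℓ * y + c i ℓ) * (a j ℓ * x + b j ℓ * y + c j ℓ) = r := by
    intro x y i j r hr; rw [← hr]; exact (key x y i j).symm
  have q00 : Qlam l 0 0 1 0 0 = 2 := by norm_num [Qlam]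
  have q10 : Qlam l 1 0 1 0 0 = 3 := by norm_num [Qlam]
  have q1'0 : Qlam l (-1) 0 1 0 0 = 3 := by norm_num [Qlam]
  have q01 : Qlam l 0 1 1 0 0 = l + 2 := by norm_num [Qlam]
  have q0'1 : Qlam l 0 (-1) 1 0 0 = l + 2 := by norm_num [Qlam]
  have e00 := E 0 0 0 0 2 q00
  have e10 := E 1 0 0 0 3 q10
  have e1'0 := E (-1) 0 0 0 3 q1'0
  have e01 := E 0 1 0 0 (l + 2) q01
  have e0'1 := E 0 (-1) 0 0 (l + 2) q0'1
  -- Σ c0² = 2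
  have hc0 : ∑ ℓ, c 0 ℓ ^ 2 = 2 := by
    rw [← e00]; exact Finset.sum_congr rfl fun ℓ _ => by ring
  -- Σ a0² = 1
  have ha0 : ∑ ℓ, a 0 ℓ ^ 2 = 1 := by
    have := comb3 _ _ _ (fun ℓ => a 0 ℓ ^ 2) _ _ _ e10 e1'0 e00 (fun ℓ => by ring)
    linarith only [this]
  -- Σ b0² = l
  have hb0 : ∑ ℓ, b 0 ℓ ^ 2 = l := by
    have := comb3 _ _ _ (fun ℓ => b 0 ℓ ^ 2) _ _ _ e01 e0'1 e00 (fun ℓ => by ring)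
    linarith only [this]
  -- entry (1,1)
  have q00b : Qlam l 0 0 1 1 1 = l := by norm_num [Qlam]
  have q10b : Qlam l 1 0 1 1 1 = l + 2 := by norm_num [Qlam]
  have q1'0b : Qlam l (-1) 0 1 1 1 = l + 2 := by norm_num [Qlam]
  have q01b : Qlam l 0 1 1 1 1 = l + 1 := by norm_num [Qlam]; ring
  have q0'1b : Qlam l 0 (-1) 1 1 1 = l + 1 := by norm_num [Qlam]; ring
  have e00b := E 0 0 1 1 l q00b
  have e10b := E 1 0 1 1 (l + 2) q10b
  have e1'0b := E (-1) 0 1 1 (l + 2) q1'0b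
  have e01b := E 0 1 1 1 (l + 1) q01b
  have e0'1b := E 0 (-1) 1 1 (l + 1) q0'1b
  have hc1 : ∑ ℓ, c 1 ℓ ^ 2 = l := by
    rw [← e00b]; exact Finset.sum_congr rfl fun ℓ _ => by ring
  have ha1 : ∑ ℓ, a 1 ℓ ^ 2 = 2 := by
    have := comb3 _ _ _ (fun ℓ => a 1 ℓ ^ 2) _ _ _ e10b e1'0b e00b (fun ℓ => by ring)
    linarith only [this]
  have hb1 : ∑ ℓ, b 1 ℓ ^ 2 = 1 := by
    have := comb3 _ _ _ (fun ℓ => b 1 ℓ ^ 2) _ _ _ e01b e0'1b e00b (fun ℓ => by ring)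
    linarith only [this]
  -- entry (2,2)
  have q00c : Qlam l 0 0 1 2 2 = 1 := by norm_num [Qlam, Matrix.cons_val_two, Matrix.tail_cons, Matrix.head_cons]
  have q10c : Qlam l 1 0 1 2 2 = l + 1 := by norm_num [Qlam, Matrix.cons_val_two, Matrix.tail_cons, Matrix.head_cons]; ring
  have q1'0c : Qlam l (-1) 0 1 2 2 = l + 1 := by norm_num [Qlam, Matrix.cons_val_two, Matrix.tail_cons, Matrix.head_cons]; ring
  have q01c : Qlam l 0 1 1 2 2 = 3 := by norm_num [Qlam, Matrix.cons_val_two, Matrix.tail_cons, Matrix.head_cons]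
  have q0'1c : Qlam l 0 (-1) 1 2 2 = 3 := by norm_num [Qlam, Matrix.cons_val_two, Matrix.tail_cons, Matrix.head_cons]
  have e00c := E 0 0 2 2 1 q00c
  have e10c := E 1 0 2 2 (l + 1) q10c
  have e1'0c := E (-1) 0 2 2 (l + 1) q1'0c
  have e01c := E 0 1 2 2 3 q01c
  have e0'1c := E 0 (-1) 2 2 3 q0'1c
  have hc2 : ∑ ℓ, c 2 ℓ ^ 2 = 1 := by
    rw [← e00c]; exact Finset.sum_congr rfl fun ℓ _ => by ring
  have ha2 : ∑ ℓ, a 2 ℓ ^ 2 = l := by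
    have := comb3 _ _ _ (fun ℓ => a 2 ℓ ^ 2) _ _ _ e10c e1'0c e00c (fun ℓ => by ring)
    linarith only [this]
  have hb2 : ∑ ℓ, b 2 ℓ ^ 2 = 2 := by
    have := comb3 _ _ _ (fun ℓ => b 2 ℓ ^ 2) _ _ _ e01c e0'1c e00c (fun ℓ => by ring)
    linarith only [this]
  -- entry (0,1) : xy coefficient
  have q11d : Qlam l 1 1 1 0 1 = -1 := by norm_num [Qlam]
  have q1'1d : Qlam l 1 (-1) 1 0 1 = 1 := by norm_num [Qlam]
  have q'11d : Qlam l (-1) 1 1 0 1 = 1 := by norm_num [Qlam]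
  have q'1'1d : Qlam l (-1) (-1) 1 0 1 = -1 := by norm_num [Qlam]
  have e11d := E 1 1 0 1 (-1) q11d
  have e1'1d := E 1 (-1) 0 1 1 q1'1d
  have e'11d := E (-1) 1 0 1 1 q'11d
  have e'1'1d := E (-1) (-1) 0 1 (-1) q'1'1d
  have hab : ∑ ℓ, (a 0 ℓ * b 1 ℓ + a 1 ℓ * b 0 ℓ) = -1 := by
    have := comb4 _ _ _ _ (fun ℓ => a 0 ℓ * b 1 ℓ + a 1 ℓ * b 0 ℓ) _ _ _ _
      e11d e1'1d e'11d e'1'1d (fun ℓ => by ring)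
    linarith only [this]
  -- entry (0,2) : x coefficient
  have q10e : Qlam l 1 0 1 0 2 = -1 := by norm_num [Qlam, Matrix.cons_val_two, Matrix.tail_cons, Matrix.head_cons]
  have q1'0e : Qlam l (-1) 0 1 0 2 = 1 := by norm_num [Qlam, Matrix.cons_val_two, Matrix.tail_cons, Matrix.head_cons]
  have e10e := E 1 0 0 2 (-1) q10e
  have e1'0e := E (-1) 0 0 2 1 q1'0e
  have hac : ∑ ℓ, (a 0 ℓ * c 2 ℓ + a 2 ℓ * c 0 ℓ) = -1 := by
    have := comb2 _ _ (fun ℓ => a 0 ℓ * c 2 ℓ + a 2 ℓ * c 0 ℓ) _ _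
      e10e e1'0e (fun ℓ => by ring)
    linarith only [this]
  -- entry (1,2) : y coefficient
  have q01f : Qlam l 0 1 1 1 2 = -1 := by norm_num [Qlam, Matrix.cons_val_two, Matrix.tail_cons, Matrix.head_cons]
  have q0'1f : Qlam l 0 (-1) 1 1 2 = 1 := by norm_num [Qlam, Matrix.cons_val_two, Matrix.tail_cons, Matrix.head_cons]
  have e01f := E 0 1 1 2 (-1) q01f
  have e0'1f := E 0 (-1) 1 2 1 q0'1f
  have hbc : ∑ ℓ, (b 1 ℓ * c 2 ℓ + b 2 ℓ * c 1 ℓ) = -1 := by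
    have := comb2 _ _ (fun ℓ => b 1 ℓ * c 2 ℓ + b 2 ℓ * c 1 ℓ) _ _
      e01f e0'1f (fun ℓ => by ring)
    linarith only [this]
  -- Cauchy-Schwarz bounds
  set s := ∑ ℓ, a 1 ℓ * b 0 ℓ with hs
  set t := ∑ ℓ, a 2 ℓ * c 0 ℓ with ht
  set r := ∑ ℓ, b 2 ℓ * c 1 ℓ with hr
  have hs2 : s ^ 2 ≤ 2 * l := by
    have := Finset.sum_mul_sq_le_sq_mul_sq Finset.univ (a 1) (b 0)
    rw [ha1, hb0] at this; exact this
  have ht2 : t ^ 2 ≤ 2 * l := by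
    have := Finset.sum_mul_sq_le_sq_mul_sq Finset.univ (a 2) (c 0)
    rw [ha2, hc0] at this; linarith only [this]
  have hr2 : r ^ 2 ≤ 2 * l := by
    have := Finset.sum_mul_sq_le_sq_mul_sq Finset.univ (b 2) (c 1)
    rw [hb2, hc1] at this; linarith only [this]
  -- split cross sums
  have hsplit1 : ∑ ℓ, a 0 ℓ * b 1 ℓ = -1 - s := by
    rw [Finset.sum_add_distrib] at hab; linarith only [hab, hs]
  have hsplit2 : ∑ ℓ, a 0 ℓ * c 2 ℓ = -1 - t := by
    rw [Finset.sum_add_distrib] at hac; linarith only [hac, ht]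
  have hsplit3 : ∑ ℓ, b 1 ℓ * c 2 ℓ = -1 - r := by
    rw [Finset.sum_add_distrib] at hbc; linarith only [hbc, hr]
  have hpos : (0:ℝ) ≤ ∑ ℓ, (a 0 ℓ + b 1 ℓ + c 2 ℓ) ^ 2 :=
    Finset.sum_nonneg fun ℓ _ => sq_nonneg _
  have hexp : ∑ ℓ, (a 0 ℓ + b 1 ℓ + c 2 ℓ) ^ 2 =
      (∑ ℓ, a 0 ℓ ^ 2) + (∑ ℓ, b 1 ℓ ^ 2) + (∑ ℓ, c 2 ℓ ^ 2)
        + 2 * (∑ ℓ, a 0 ℓ * b 1 ℓ) + 2 * (∑ ℓ, a 0 ℓ * c 2 ℓ)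
        + 2 * (∑ ℓ, b 1 ℓ * c 2 ℓ) := by
    rw [Finset.mul_sum, Finset.mul_sum, Finset.mul_sum, ← Finset.sum_add_distrib,
      ← Finset.sum_add_distrib, ← Finset.sum_add_distrib, ← Finset.sum_add_distrib,
      ← Finset.sum_add_distrib]
    exact Finset.sum_congr rfl fun ℓ _ => by ring
  rw [hexp, ha0, hb1, hc2, hsplit1, hsplit2, hsplit3] at hpos
  exact final_contra l s t r h2 hs2 ht2 hr2 hpos

theorem stmt_12 (l : ℝ) (h1 : 0 < l) (h2 : l < 2 / 81) :
    (¬ ∃ (L : ℕ) (Mv : Fin L → Matrix (Fin 3) (Fin 3) ℝ), 0 < L ∧ ∀ x y : ℝ,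
        Qlam l x y 1 = ∑ ℓ, vecMulVec (Mv ℓ *ᵥ ![x, y, 1]) (Mv ℓ *ᵥ ![x, y, 1])) ∧
    (¬ ∃ (L : ℕ) (w : Fin L → (Fin 3 → ℝ) →ₗ[ℝ] (Fin 3 → ℝ)), 0 < L ∧ ∀ W : Fin 3 → ℝ,
        Qlam l (W 0) (W 1) (W 2) = ∑ ℓ, vecMulVec (w ℓ W) (w ℓ W)) := by
  refine ⟨no_sos l h1 h2, ?_⟩
  rintro ⟨L, w, hL, hw⟩
  refine no_sos l h1 h2 ⟨L, fun ℓ => LinearMap.toMatrix' (w ℓ), hL, fun x y => ?_⟩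
  have := hw ![x, y, 1]
  simp only [Matrix.cons_val_zero, Matrix.cons_val_one, Matrix.head_cons,
    Matrix.cons_val_two, Matrix.tail_cons] at this
  rw [this]
  refine Finset.sum_congr rfl fun ℓ _ => ?_
  rw [← Matrix.toLin'_apply (LinearMap.toMatrix' (w ℓ)), Matrix.toLin'_toMatrix']
end

section
/- Let 0 < α ≤ 1, ρ > 0, let Q : ℝ³ → Sym₃(ℝ) be a matrix-valued quadratic form (each entry a homogeneous polynomial of degree 2), and let P : B(0, ρ) ⊂ ℝ³ → Sym₃(ℝ) satisfy ‖P(W) − Q(W)‖ ≤ C₀|W|^{2+α} on B(0, ρ) for some constant C₀. If there exist functions u¹, …, u^L : B(0, ρ) → ℝ³, each of class C^{1,α} on B(0, ρ), with P(W) = Σ_{ℓ=1}^{L} u^ℓ(W) u^ℓ(W)ᵀ for all W ∈ B(0, ρ), then there exist affine maps v^ℓ : ℝ³ → ℝ³ (each coordinate a polynomial of degree at most 1) such that Q(W) = Σ_{ℓ=1}^{L} v^ℓ(W) v^ℓ(W)ᵀ for all W ∈ ℝ³. -/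
open Matrix Metric Set Filter

attribute [local instance] Matrix.normedAddCommGroup
attribute [local instance] Matrix.normedSpace

noncomputable section

/-- `f` is of class `C^{k,α}` on the set `U`. -/
def CHolderOn {X F : Type*} [NormedAddCommGroup X] [NormedSpace ℝ X]
    [NormedAddCommGroup F] [NormedSpace ℝ F]
    (k : ℕ) (δ : ℝ) (f : X → F) (U : Set X) : Prop :=
  ContDiffOn ℝ k f U ∧
    ∃ C : NNReal, HolderOnWith C δ.toNNReal (fun x => iteratedFDerivWithin ℝ k f U x) U

lemma holderOn_dist_le {X Y : Type*} [PseudoMetricSpace X] [PseudoMetricSpace Y]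
    {C r : NNReal} {f : X → Y} {s : Set X} (hf : HolderOnWith C r f s)
    {x y : X} (hx : x ∈ s) (hy : y ∈ s) :
    dist (f x) (f y) ≤ C * dist x y ^ (r : ℝ) := by
  have h := hf.edist_le hx hy
  rw [edist_nndist, edist_nndist, ← ENNReal.coe_rpow_of_nonneg _ r.coe_nonneg,
    ← ENNReal.coe_mul, ENNReal.coe_le_coe] at h
  rw [dist_nndist, dist_nndist]
  exact_mod_cast h

lemma abs_le_pinorm (v : Fin 3 → ℝ) (k : Fin 3) : |v k| ≤ ‖v‖ := by
  rw [← Real.norm_eq_abs]; exact norm_le_pi_norm v k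

lemma vmv_diff (x y : Fin 3 → ℝ) :
    ‖vecMulVec x x - vecMulVec y y‖ ≤ ‖x - y‖ * ‖x‖ + ‖y‖ * ‖x - y‖ := by
  rw [Matrix.norm_le_iff (by positivity)]
  intro i j
  have h : (vecMulVec x x - vecMulVec y y) i j = (x i - y i) * x j + y i * (x j - y j) := by
    simp [vecMulVec_apply]; ring
  rw [h, Real.norm_eq_abs]
  calc |(x i - y i) * x j + y i * (x j - y j)|
      ≤ |(x i - y i) * x j| + |y i * (x j - y j)| := abs_add_le _ _
    _ = |x i - y i| * |x j| + |y i| * |x j - y j| := by rw [abs_mul, abs_mul]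
    _ ≤ ‖x - y‖ * ‖x‖ + ‖y‖ * ‖x - y‖ :=
        add_le_add
          (mul_le_mul (by simpa using abs_le_pinorm (x - y) i) (abs_le_pinorm x j)
            (abs_nonneg _) (norm_nonneg _))
          (mul_le_mul (abs_le_pinorm y i) (by simpa using abs_le_pinorm (x - y) j)
            (abs_nonneg _) (norm_nonneg _))

lemma taylor_bound {ρ α : ℝ} (hρ : 0 < ρ) (hα0 : 0 < α)
    {f : E 3 → (Fin 3 → ℝ)} {C : NNReal}
    (hd : ContDiffOn ℝ 1 f (ball (0 : E 3) ρ))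
    (hC : HolderOnWith C α.toNNReal
      (fun x => iteratedFDerivWithin ℝ 1 f (ball (0 : E 3) ρ) x) (ball (0 : E 3) ρ))
    {W : E 3} (hW : W ∈ ball (0 : E 3) ρ) :
    ‖f W - f 0 - fderivWithin ℝ f (ball (0 : E 3) ρ) 0 W‖ ≤ C * ‖W‖ ^ α * ‖W‖ := by
  set U := ball (0 : E 3) ρ with hUdef
  have hUopen : IsOpen U := isOpen_ball
  have hUuniq : UniqueDiffOn ℝ U := hUopen.uniqueDiffOn
  have h0U : (0 : E 3) ∈ U := by simp [hUdef, hρ]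
  have hdiff : DifferentiableOn ℝ f U := hd.differentiableOn one_ne_zero
  have hfd : ∀ x ∈ U, ∀ y ∈ U,
      ‖fderivWithin ℝ f U x - fderivWithin ℝ f U y‖ ≤ C * ‖x - y‖ ^ α := by
    intro x hx y hy
    have hdist := holderOn_dist_le hC hx hy
    rw [Real.coe_toNNReal α hα0.le] at hdist
    refine ContinuousLinearMap.opNorm_le_bound _ (by positivity) fun v => ?_
    have key : (fderivWithin ℝ f U x - fderivWithin ℝ f U y) v
        = (iteratedFDerivWithin ℝ 1 f U x - iteratedFDerivWithin ℝ 1 f U y) (fun _ => v) := by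
      simp [ContinuousLinearMap.sub_apply, ContinuousMultilinearMap.sub_apply,
        iteratedFDerivWithin_one_apply (hUuniq x hx), iteratedFDerivWithin_one_apply (hUuniq y hy)]
    rw [key]
    calc ‖(iteratedFDerivWithin ℝ 1 f U x - iteratedFDerivWithin ℝ 1 f U y) (fun _ => v)‖
        ≤ ‖iteratedFDerivWithin ℝ 1 f U x - iteratedFDerivWithin ℝ 1 f U y‖ * ∏ _i : Fin 1, ‖v‖ :=
          (iteratedFDerivWithin ℝ 1 f U x - iteratedFDerivWithin ℝ 1 f U y).le_opNorm _
      _ ≤ C * ‖x - y‖ ^ α * ‖v‖ := by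
          rw [Finset.prod_const, Finset.card_univ, Fintype.card_fin, pow_one]
          gcongr
          rw [← dist_eq_norm, ← dist_eq_norm]
          exact hdist
  have hseg : segment ℝ (0 : E 3) W ⊆ U :=
    (convex_ball _ _).segment_subset h0U hW
  have hmv := (convex_segment (0 : E 3) W).norm_image_sub_le_of_norm_hasFDerivWithin_le'
    (f := f) (f' := fun x => fderivWithin ℝ f U x) (φ := fderivWithin ℝ f U 0)
    (C := C * ‖W‖ ^ α)
    (fun x hx => ((hdiff x (hseg hx)).hasFDerivWithinAt).mono hseg)
    (fun x hx => by
      have hxU := hseg hx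
      have h1 := hfd x hxU 0 h0U
      rw [sub_zero] at h1
      refine h1.trans ?_
      have hxn : ‖x‖ ≤ ‖W‖ := by
        obtain ⟨a, b, ha, hb, hab, hx'⟩ := hx
        rw [← hx']
        simp only [smul_zero, zero_add, norm_smul, Real.norm_eq_abs, abs_of_nonneg hb]
        nlinarith [norm_nonneg W]
      gcongr)
    (left_mem_segment ℝ _ _) (right_mem_segment ℝ _ _)
  simpa using hmv

-- decomposition of a Euclidean vector in the standard basis
lemma eucl_decomp (W : E 3) : ∑ j, W j • EuclideanSpace.single j (1 : ℝ) = W := by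
  have h := (EuclideanSpace.basisFun (Fin 3) ℝ).sum_repr W
  simpa [EuclideanSpace.basisFun_apply, EuclideanSpace.basisFun_repr] using h

set_option maxHeartbeats 2000000 in
theorem stmt_14 (α ρ C₀ : ℝ) (hα0 : 0 < α) (hα1 : α ≤ 1) (hρ : 0 < ρ)
    (Q : E 3 → Matrix (Fin 3) (Fin 3) ℝ)
    (hQsym : ∀ W, (Q W).IsSymm)
    (hQquad : ∀ i j : Fin 3, ∃ c : Matrix (Fin 3) (Fin 3) ℝ,
        ∀ W : E 3, Q W i j = ∑ s, ∑ t, c s t * W s * W t)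
    (P : E 3 → Matrix (Fin 3) (Fin 3) ℝ)
    (hPsym : ∀ W ∈ Metric.ball (0 : E 3) ρ, (P W).IsSymm)
    (hPQ : ∀ W ∈ Metric.ball (0 : E 3) ρ, ‖P W - Q W‖ ≤ C₀ * ‖W‖ ^ (2 + α))
    (L : ℕ) (u : Fin L → E 3 → (Fin 3 → ℝ))
    (hu : ∀ ℓ, CHolderOn 1 α (u ℓ) (Metric.ball (0 : E 3) ρ))
    (hrep : ∀ W ∈ Metric.ball (0 : E 3) ρ, P W = ∑ ℓ, vecMulVec (u ℓ W) (u ℓ W)) :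
    ∃ (Av : Fin L → Matrix (Fin 3) (Fin 3) ℝ) (bv : Fin L → Fin 3 → ℝ),
      ∀ W : E 3, Q W = ∑ ℓ, vecMulVec (Av ℓ *ᵥ (W : Fin 3 → ℝ) + bv ℓ)
        (Av ℓ *ᵥ (W : Fin 3 → ℝ) + bv ℓ) := by
  set U := Metric.ball (0 : E 3) ρ with hUdef
  have h0U : (0 : E 3) ∈ U := by simp [hUdef, hρ]
  have hcd : ∀ ℓ, ContDiffOn ℝ 1 (u ℓ) U := fun ℓ => (hu ℓ).1
  choose C hC using fun ℓ => (hu ℓ).2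
  -- Q 0 = 0
  have hQ0 : Q 0 = 0 := by
    ext i j
    obtain ⟨c, hc⟩ := hQquad i j
    simp [hc 0]
  -- P 0 = 0
  have hP0 : P 0 = 0 := by
    have h := hPQ 0 h0U
    rw [hQ0, sub_zero, norm_zero, Real.zero_rpow (by positivity), mul_zero] at h
    exact norm_le_zero_iff.mp h
  -- u ℓ 0 = 0
  have hu0 : ∀ ℓ, u ℓ 0 = 0 := by
    intro ℓ
    have hsum : ∑ ℓ', vecMulVec (u ℓ' 0) (u ℓ' 0) = 0 := by rw [← hrep 0 h0U, hP0]
    funext i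
    have hdiag : ∑ ℓ', u ℓ' 0 i * u ℓ' 0 i = 0 := by
      have := congrFun (congrFun (congrArg (fun M => (M : Matrix (Fin 3) (Fin 3) ℝ)) hsum) i) i
      simpa [Matrix.sum_apply, vecMulVec_apply] using this
    have := (Finset.sum_eq_zero_iff_of_nonneg
      (fun ℓ' _ => mul_self_nonneg (u ℓ' 0 i))).mp hdiag ℓ (Finset.mem_univ ℓ)
    exact mul_self_eq_zero.mp this
  -- the linear maps
  set A : Fin L → (E 3 →L[ℝ] (Fin 3 → ℝ)) := fun ℓ => fderivWithin ℝ (u ℓ) U 0 with hAdef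
  -- Taylor estimates
  have htay : ∀ ℓ, ∀ W ∈ U, ‖u ℓ W - A ℓ W‖ ≤ C ℓ * ‖W‖ ^ α * ‖W‖ := by
    intro ℓ W hW
    have := taylor_bound hρ hα0 (hcd ℓ) (hC ℓ) hW
    rwa [hu0 ℓ, sub_zero] at this
  -- comparison of Q with the quadratic model R
  set R : E 3 → Matrix (Fin 3) (Fin 3) ℝ := fun W => ∑ ℓ, vecMulVec (A ℓ W) (A ℓ W) with hRdef
  set K : ℝ := C₀ + ∑ ℓ, ((C ℓ : ℝ) * ρ ^ α + 2 * ‖A ℓ‖) * C ℓ with hKdef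
  have hcomp : ∀ W ∈ U, ‖Q W - R W‖ ≤ K * (‖W‖ ^ α * ‖W‖ * ‖W‖) := by
    intro W hW
    have hWρ : ‖W‖ < ρ := by simpa [hUdef, dist_eq_norm] using hW
    have hterm : ∀ ℓ : Fin L, ‖vecMulVec (u ℓ W) (u ℓ W) - vecMulVec (A ℓ W) (A ℓ W)‖
        ≤ ((C ℓ : ℝ) * ρ ^ α + 2 * ‖A ℓ‖) * C ℓ * (‖W‖ ^ α * ‖W‖ * ‖W‖) := by
      intro ℓ
      have h1 := htay ℓ W hW
      have h2 : ‖u ℓ W‖ ≤ C ℓ * ‖W‖ ^ α * ‖W‖ + ‖A ℓ‖ * ‖W‖ := by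
        calc ‖u ℓ W‖ = ‖(u ℓ W - A ℓ W) + A ℓ W‖ := by ring_nf
          _ ≤ ‖u ℓ W - A ℓ W‖ + ‖A ℓ W‖ := norm_add_le _ _
          _ ≤ C ℓ * ‖W‖ ^ α * ‖W‖ + ‖A ℓ‖ * ‖W‖ :=
              add_le_add h1 ((A ℓ).le_opNorm W)
      have h3 : ‖A ℓ W‖ ≤ ‖A ℓ‖ * ‖W‖ := (A ℓ).le_opNorm W
      have h4 := vmv_diff (u ℓ W) (A ℓ W)
      have hrpow : (‖W‖ : ℝ) ^ α ≤ ρ ^ α :=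
        Real.rpow_le_rpow (norm_nonneg _) hWρ.le hα0.le
      calc ‖vecMulVec (u ℓ W) (u ℓ W) - vecMulVec (A ℓ W) (A ℓ W)‖
          ≤ ‖u ℓ W - A ℓ W‖ * ‖u ℓ W‖ + ‖A ℓ W‖ * ‖u ℓ W - A ℓ W‖ := h4
        _ ≤ (C ℓ * ‖W‖ ^ α * ‖W‖) * (C ℓ * ‖W‖ ^ α * ‖W‖ + ‖A ℓ‖ * ‖W‖)
            + (‖A ℓ‖ * ‖W‖) * (C ℓ * ‖W‖ ^ α * ‖W‖) := by
            gcongr <;> first | exact h1 | exact h2 | exact h3 | positivity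
        _ ≤ ((C ℓ : ℝ) * ρ ^ α + 2 * ‖A ℓ‖) * C ℓ * (‖W‖ ^ α * ‖W‖ * ‖W‖) := by
            have hWn : (0:ℝ) ≤ ‖W‖ := norm_nonneg _
            have hWa : (0:ℝ) ≤ ‖W‖ ^ α := Real.rpow_nonneg hWn α
            have hAn : (0:ℝ) ≤ ‖A ℓ‖ := norm_nonneg _
            have hCn : (0:ℝ) ≤ (C ℓ : ℝ) := (C ℓ).coe_nonneg
            nlinarith [mul_le_mul_of_nonneg_right hrpow
                (mul_nonneg (mul_nonneg (mul_nonneg hCn hCn) hWa) (mul_nonneg hWn hWn)),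
              mul_nonneg (mul_nonneg (mul_nonneg hAn hCn) hWa) (mul_nonneg hWn hWn)]
    have hPR : ‖P W - R W‖ ≤ (∑ ℓ, ((C ℓ : ℝ) * ρ ^ α + 2 * ‖A ℓ‖) * C ℓ) * (‖W‖ ^ α * ‖W‖ * ‖W‖) := by
      rw [hrep W hW, hRdef]
      calc ‖∑ ℓ, vecMulVec (u ℓ W) (u ℓ W) - ∑ ℓ, vecMulVec (A ℓ W) (A ℓ W)‖
          = ‖∑ ℓ, (vecMulVec (u ℓ W) (u ℓ W) - vecMulVec (A ℓ W) (A ℓ W))‖ := by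
            rw [Finset.sum_sub_distrib]
        _ ≤ ∑ ℓ, ‖vecMulVec (u ℓ W) (u ℓ W) - vecMulVec (A ℓ W) (A ℓ W)‖ := norm_sum_le _ _
        _ ≤ ∑ ℓ, ((C ℓ : ℝ) * ρ ^ α + 2 * ‖A ℓ‖) * C ℓ * (‖W‖ ^ α * ‖W‖ * ‖W‖) :=
            Finset.sum_le_sum fun ℓ _ => hterm ℓ
        _ = (∑ ℓ, ((C ℓ : ℝ) * ρ ^ α + 2 * ‖A ℓ‖) * C ℓ) * (‖W‖ ^ α * ‖W‖ * ‖W‖) := by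
            rw [Finset.sum_mul]
    have hQP : ‖Q W - P W‖ ≤ C₀ * (‖W‖ ^ α * ‖W‖ * ‖W‖) := by
      rw [norm_sub_rev]
      refine (hPQ W hW).trans (le_of_eq ?_)
      congr 1
      rw [show (2 : ℝ) + α = α + 1 + 1 by ring,
        Real.rpow_add' (norm_nonneg _) (by positivity),
        Real.rpow_add' (norm_nonneg _) (by positivity), Real.rpow_one]
    calc ‖Q W - R W‖ = ‖(Q W - P W) + (P W - R W)‖ := by rw [sub_add_sub_cancel]
      _ ≤ ‖Q W - P W‖ + ‖P W - R W‖ := norm_add_le _ _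
      _ ≤ C₀ * (‖W‖ ^ α * ‖W‖ * ‖W‖)
          + (∑ ℓ, ((C ℓ : ℝ) * ρ ^ α + 2 * ‖A ℓ‖) * C ℓ) * (‖W‖ ^ α * ‖W‖ * ‖W‖) :=
          add_le_add hQP hPR
      _ = K * (‖W‖ ^ α * ‖W‖ * ‖W‖) := by rw [hKdef]; ring
  -- homogeneity of Q
  have hQhom : ∀ (t : ℝ) (W : E 3), Q (t • W) = (t * t) • Q W := by
    intro t W
    ext i j
    obtain ⟨c, hc⟩ := hQquad i j
    rw [Matrix.smul_apply, hc, hc, smul_eq_mul, Finset.mul_sum]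
    refine Finset.sum_congr rfl fun s _ => ?_
    rw [Finset.mul_sum]
    refine Finset.sum_congr rfl fun t' _ => ?_
    have h1 : (t • W) s = t * W s := rfl
    have h2 : (t • W) t' = t * W t' := rfl
    rw [h1, h2]; ring
  -- homogeneity of R
  have hRhom : ∀ (t : ℝ) (W : E 3), R (t • W) = (t * t) • R W := by
    intro t W
    rw [hRdef, Finset.smul_sum]
    refine Finset.sum_congr rfl fun ℓ _ => ?_
    ext i j
    rw [(A ℓ).map_smul]
    simp [vecMulVec_apply, Matrix.smul_apply]
    ring
  -- main identity
  have hmain : ∀ W : E 3, Q W = R W := by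
    intro W
    rw [← sub_eq_zero, ← norm_le_zero_iff]
    set d : ℝ := ‖Q W - R W‖ with hddef
    have hbound : ∀ t : ℝ, 0 < t → t < ρ / (‖W‖ + 1) →
        d ≤ K * (t ^ α * (‖W‖ ^ α * ‖W‖ * ‖W‖)) := by
      intro t ht htρ
      have hWn : (0:ℝ) ≤ ‖W‖ := norm_nonneg _
      have htWρ : t * (‖W‖ + 1) < ρ := by
        rw [lt_div_iff₀ (by positivity)] at htρ
        exact htρ
      have htW : t • W ∈ U := by
        rw [hUdef, mem_ball, dist_zero_right, norm_smul, Real.norm_eq_abs, abs_of_pos ht]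
        nlinarith
      have h := hcomp (t • W) htW
      rw [hQhom t W, hRhom t W, ← smul_sub, norm_smul, Real.norm_eq_abs] at h
      have hnorm : ‖t • W‖ = t * ‖W‖ := by
        rw [norm_smul, Real.norm_eq_abs, abs_of_pos ht]
      rw [hnorm] at h
      have habs : |t * t| = t * t := abs_of_pos (by positivity)
      rw [habs] at h
      have hrw : (t * ‖W‖) ^ α * (t * ‖W‖) * (t * ‖W‖)
          = (t * t) * (t ^ α * (‖W‖ ^ α * ‖W‖ * ‖W‖)) := by
        rw [Real.mul_rpow ht.le hWn]; ring
      rw [hrw] at h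
      have h2 : (t * t) * d ≤ (t * t) * (K * (t ^ α * (‖W‖ ^ α * ‖W‖ * ‖W‖))) := by
        nlinarith [h]
      exact le_of_mul_le_mul_left h2 (by positivity)
    -- take the limit t → 0⁺
    have hlim : Tendsto (fun t : ℝ => K * (t ^ α * (‖W‖ ^ α * ‖W‖ * ‖W‖)))
        (nhdsWithin 0 (Ioi 0)) (nhds 0) := by
      have h1 : Tendsto (fun t : ℝ => t ^ α) (nhds 0) (nhds 0) := by
        have := (Real.continuousAt_rpow_const 0 α (Or.inr hα0.le)).tendsto
        simpa [Real.zero_rpow hα0.ne'] using this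
      have h2 := ((h1.mono_left (nhdsWithin_le_nhds (s := Ioi (0:ℝ)))).mul_const (‖W‖ ^ α * ‖W‖ * ‖W‖)).const_mul K
      simpa using h2
    refine ge_of_tendsto hlim ?_
    have hmem : Ioo (0:ℝ) (ρ / (‖W‖ + 1)) ∈ nhdsWithin (0:ℝ) (Ioi 0) :=
      Ioo_mem_nhdsGT_of_mem ⟨le_refl 0, by positivity⟩
    filter_upwards [hmem] with t ht
    exact hbound t ht.1 ht.2
  -- assemble the answer
  refine ⟨fun ℓ => Matrix.of fun i j => A ℓ (EuclideanSpace.single j 1) i, fun _ => 0, fun W => ?_⟩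
  have hAv : ∀ ℓ, (Matrix.of fun i j => A ℓ (EuclideanSpace.single j 1) i) *ᵥ (W : Fin 3 → ℝ)
      = A ℓ W := by
    intro ℓ
    funext i
    have hdec := eucl_decomp W
    conv_rhs => rw [← hdec]
    rw [map_sum]
    simp only [Matrix.mulVec, Matrix.of_apply, dotProduct, _root_.map_smul]
    simp [Finset.sum_apply, mul_comm]
  simp only [hAv, add_zero]
  exact hmain W
end
end

section
/- Fix 0 < λ < 2/81. Let ω be a modulus of continuity and let ν be a positive integer. Then there exists a decreasing function 𝒞 : (0, 1) → (0, ∞) with lim_{τ→0⁺} 𝒞(τ) = ∞ such that: whenever τ ∈ (0, 1) and g₁, …, g_ν : B(0, 1) ⊂ ℝ³ → ℝ³ are functions with finite C^{1,ω} norm on B(0, 1) satisfying Q_λ(W) + τ·I₃ = Σ_{j=1}^{ν} g_j(W) g_j(W)ᵀ for all W ∈ B(0, 1), one has Σ_{j=1}^{ν} ‖g_j‖_{C^{1,ω}(B(0,1))} ≥ 𝒞(τ). -/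
open Matrix Filter

noncomputable section

noncomputable def QlamV (l : ℝ) (W : E 3) : Matrix (Fin 3) (Fin 3) ℝ :=
  Qlam l (W 0) (W 1) (W 2)

/-- The three pieces of the `C^{1,ω}` norm of `h` on the unit ball: sup of `|h|`,
sup of `|∇h|`, and the `ω`-Hölder seminorm of `∇h`. -/
def supSet (h : E 3 → Fin 3 → ℝ) : Set ℝ := (fun W => ‖h W‖) '' Metric.ball (0 : E 3) 1

noncomputable def derSet (h : E 3 → Fin 3 → ℝ) : Set ℝ :=
  (fun W => ‖fderiv ℝ h W‖) '' Metric.ball (0 : E 3) 1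

noncomputable def holSet (ω : ℝ → ℝ) (h : E 3 → Fin 3 → ℝ) : Set ℝ :=
  (fun p : E 3 × E 3 => ‖fderiv ℝ h p.1 - fderiv ℝ h p.2‖ / ω ‖p.1 - p.2‖) ''
    {p | p.1 ∈ Metric.ball (0 : E 3) 1 ∧ p.2 ∈ Metric.ball (0 : E 3) 1 ∧ p.1 ≠ p.2}

/-- The `C^{1,ω}` norm of `h` on the unit ball. -/
noncomputable def c1ωNorm (ω : ℝ → ℝ) (h : E 3 → Fin 3 → ℝ) : ℝ :=
  sSup (supSet h) + sSup (derSet h) + sSup (holSet ω h)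

/-! ### The dual certificate: 15 evaluation points -/

def Wpt : Fin 15 → Fin 3 → ℝ :=
  ![![1,1,0], ![1,-1,0], ![0,1,0], ![1,0,0], ![1,0,0],
    ![0,1,1], ![0,1,-1], ![0,0,1], ![0,1,0], ![0,1,0],
    ![1,0,1], ![-1,0,1], ![1,0,0], ![0,0,1], ![0,0,1]]

def vpt : Fin 15 → Fin 3 → ℝ :=
  ![![1,1,0], ![1,-1,0], ![1,0,0], ![0,1,0], ![1,0,0],
    ![0,1,1], ![0,1,-1], ![0,1,0], ![0,0,1], ![0,1,0],
    ![1,0,1], ![-1,0,1], ![0,0,1], ![1,0,0], ![0,0,1]]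

def cc : Fin 15 → ℝ :=
  ![2,2,12,-3,-3, 2,2,12,-3,-3, 2,2,12,-3,-3]

lemma cert1 (m : Fin 3 → Fin 3 → ℝ) :
    0 ≤ ∑ k, cc k * (∑ j, vpt k j * (∑ i, m j i * Wpt k i))^2 := by
  have : ∑ k, cc k * (∑ j, vpt k j * (∑ i, m j i * Wpt k i))^2
      = 4*(m 0 0 + m 1 1 + m 2 2)^2 + (m 0 0)^2 + (m 1 1)^2 + (m 2 2)^2
        + (4*m 0 1 + m 1 0)^2 + (4*m 1 2 + m 2 1)^2 + (4*m 2 0 + m 0 2)^2 := by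
    simp [Fin.sum_univ_succ, Wpt, vpt, cc]
    ring
  rw [this]
  positivity

lemma cert2 (l τ r : ℝ) :
    ∑ k, cc k * ((vpt k) ⬝ᵥ ((Qlam l (r*Wpt k 0) (r*Wpt k 1) (r*Wpt k 2)
      + τ • (1:Matrix (Fin 3) (Fin 3) ℝ)).mulVec (vpt k)))
    = (48*l - 3)*r^2 + 42*τ := by
  simp [Fin.sum_univ_succ, Wpt, vpt, cc, Qlam, Matrix.mulVec, dotProduct,
    Matrix.one_apply, Fin.sum_univ_three]
  ring

lemma cert3 : ∑ k, cc k * ((vpt k 0)^2 + (vpt k 1)^2 + (vpt k 2)^2) = 42 := by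
  simp [Fin.sum_univ_succ, vpt, cc]
  norm_num

lemma cert4 : ∑ k, |cc k| = 66 := by
  norm_num [Fin.sum_univ_succ, cc]

lemma q0 (v : Fin 3 → ℝ) (l τ : ℝ) :
    v ⬝ᵥ ((Qlam l 0 0 0 + τ • (1:Matrix (Fin 3) (Fin 3) ℝ)).mulVec v)
    = τ * ((v 0)^2 + (v 1)^2 + (v 2)^2) := by
  simp [Qlam, Matrix.mulVec, dotProduct, Matrix.one_apply, Fin.sum_univ_three]
  ring

lemma vpt_abs (k : Fin 15) (i : Fin 3) : |vpt k i| ≤ 1 := by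
  fin_cases k <;> fin_cases i <;> norm_num [vpt]

lemma Wpt_sq (k : Fin 15) : (Wpt k 0)^2 + (Wpt k 1)^2 + (Wpt k 2)^2 ≤ 2 := by
  fin_cases k <;> norm_num [Wpt, Matrix.cons_val_two]

lemma vpt_sq (k : Fin 15) : (vpt k 0)^2 + (vpt k 1)^2 + (vpt k 2)^2 ≤ 3 := by
  fin_cases k <;> norm_num [vpt, Matrix.cons_val_two]

/-! ### Linear algebra plumbing -/

def toE (w : Fin 3 → ℝ) : E 3 := (WithLp.equiv 2 _).symm w

lemma toE_apply (w : Fin 3 → ℝ) (i : Fin 3) : toE w i = w i := rfl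

lemma sumsq (ν : ℕ) (u : Fin ν → Fin 3 → ℝ) (v : Fin 3 → ℝ) :
    v ⬝ᵥ ((∑ j, vecMulVec (u j) (u j)).mulVec v) = ∑ j, (v ⬝ᵥ u j)^2 := by
  have h1 : (∑ j, vecMulVec (u j) (u j)).mulVec v = ∑ j, (vecMulVec (u j) (u j)).mulVec v := by
    ext i
    simp [Matrix.mulVec, dotProduct, Matrix.sum_apply, Finset.sum_apply,
      Finset.sum_mul]
    rw [Finset.sum_comm]
  rw [h1]
  have h2 : v ⬝ᵥ (∑ j, (vecMulVec (u j) (u j)).mulVec v)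
      = ∑ j, v ⬝ᵥ ((vecMulVec (u j) (u j)).mulVec v) := by
    simp [dotProduct, Finset.sum_apply, Finset.mul_sum]
    rw [Finset.sum_comm]
  rw [h2]
  refine Finset.sum_congr rfl (fun j _ => ?_)
  simp [Matrix.mulVec, dotProduct, Matrix.vecMulVec_apply, Fin.sum_univ_three]
  ring

lemma norm_toE (w : Fin 3 → ℝ) : ‖toE w‖ = Real.sqrt ((w 0)^2 + (w 1)^2 + (w 2)^2) := by
  rw [EuclideanSpace.norm_eq]
  simp [Fin.sum_univ_three, toE_apply, Real.norm_eq_abs, sq_abs]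

def bE (i : Fin 3) : E 3 := EuclideanSpace.single i 1

lemma toE_sum (w : Fin 3 → ℝ) : toE w = ∑ i, w i • bE i := by
  ext j
  rw [WithLp.ofLp_sum, Finset.sum_apply]
  simp [toE_apply, bE, EuclideanSpace.single_apply, PiLp.smul_apply, mul_ite,
    Finset.sum_ite_eq]

lemma clm_apply (L : E 3 →L[ℝ] (Fin 3 → ℝ)) (w : Fin 3 → ℝ) (j : Fin 3) :
    L (toE w) j = ∑ i, w i * L (bE i) j := by
  rw [toE_sum, map_sum]
  simp [Finset.sum_apply]

lemma dot_le (v u : Fin 3 → ℝ) (hv : ∀ i, |v i| ≤ 1) : |v ⬝ᵥ u| ≤ 3 * ‖u‖ := by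
  have h : ∀ i, |v i * u i| ≤ ‖u‖ := by
    intro i
    rw [abs_mul]
    calc |v i| * |u i| ≤ 1 * ‖u‖ := by
          apply mul_le_mul (hv i) ?_ (abs_nonneg _) zero_le_one
          simpa [Real.norm_eq_abs] using norm_le_pi_norm u i
      _ = ‖u‖ := one_mul _
  calc |v ⬝ᵥ u| = |∑ i, v i * u i| := rfl
    _ ≤ ∑ i, |v i * u i| := Finset.abs_sum_le_sum_abs _ _
    _ ≤ ∑ _i : Fin 3, ‖u‖ := Finset.sum_le_sum (fun i _ => h i)
    _ = 3 * ‖u‖ := by rw [Fin.sum_univ_three]; ring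

lemma norm_toE_lt (k : Fin 15) : ‖toE (Wpt k)‖ < 2 := by
  rw [norm_toE]
  have h4 : Real.sqrt 4 = 2 := by
    rw [show (4:ℝ) = 2^2 by norm_num]
    exact Real.sqrt_sq (by norm_num)
  calc Real.sqrt ((Wpt k 0)^2 + (Wpt k 1)^2 + (Wpt k 2)^2)
      ≤ Real.sqrt 2 := Real.sqrt_le_sqrt (Wpt_sq k)
    _ < Real.sqrt 4 := Real.sqrt_lt_sqrt (by norm_num) (by norm_num)
    _ = 2 := h4

/-! ### C^{1,ω} facts -/

section perh
variable (ω : ℝ → ℝ) (h : E 3 → Fin 3 → ℝ)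

lemma h0_le (hb : BddAbove (supSet h)) : ‖h 0‖ ≤ sSup (supSet h) :=
  le_csSup hb ⟨0, by simp, rfl⟩

lemma der0_le (hb : BddAbove (derSet h)) : ‖fderiv ℝ h 0‖ ≤ sSup (derSet h) :=
  le_csSup hb ⟨0, by simp, rfl⟩

lemma hol_le (hωpos : ∀ t : ℝ, 0 < t → 0 < ω t) (hω0 : ω 0 = 0)
    (hb : BddAbove (holSet ω h))
    (x : E 3) (hx : x ∈ Metric.ball (0 : E 3) 1) :
    ‖fderiv ℝ h x - fderiv ℝ h 0‖ ≤ sSup (holSet ω h) * ω ‖x‖ := by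
  rcases eq_or_ne x 0 with rfl | hne
  · simp [hω0]
  · have hωx : 0 < ω ‖x‖ := hωpos _ (norm_pos_iff.2 hne)
    have mem : ‖fderiv ℝ h x - fderiv ℝ h 0‖ / ω ‖x‖ ∈ holSet ω h := by
      refine ⟨(x, 0), ⟨hx, by simp, hne⟩, by simp⟩
    have := le_csSup hb mem
    rw [div_le_iff₀ hωx] at this
    linarith [this]

lemma sup_nonneg' (hb : BddAbove (supSet h)) : 0 ≤ sSup (supSet h) :=
  le_trans (norm_nonneg _) (h0_le h hb)

lemma der_nonneg' (hb : BddAbove (derSet h)) : 0 ≤ sSup (derSet h) :=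
  le_trans (norm_nonneg _) (der0_le h hb)

lemma hol_nonneg' (hωpos : ∀ t : ℝ, 0 < t → 0 < ω t) (hb : BddAbove (holSet ω h)) :
    0 ≤ sSup (holSet ω h) := by
  have hx : EuclideanSpace.single (0 : Fin 3) (1/2 : ℝ) ∈ Metric.ball (0 : E 3) 1 := by
    rw [Metric.mem_ball, dist_zero_right, EuclideanSpace.norm_single]
    norm_num
  have hne : EuclideanSpace.single (0 : Fin 3) (1/2 : ℝ) ≠ 0 := by
    intro hc
    have := congrArg (fun x : E 3 => x 0) hc
    simp [EuclideanSpace.single_apply] at this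
  have mem : ‖fderiv ℝ h (EuclideanSpace.single (0:Fin 3) (1/2:ℝ)) - fderiv ℝ h 0‖ /
      ω ‖(EuclideanSpace.single (0:Fin 3) (1/2:ℝ) : E 3) - 0‖ ∈ holSet ω h :=
    ⟨(EuclideanSpace.single (0:Fin 3) (1/2:ℝ), 0), ⟨hx, by simp, hne⟩, rfl⟩
  refine le_trans ?_ (le_csSup hb mem)
  have : (0:ℝ) < ω ‖(EuclideanSpace.single (0:Fin 3) (1/2:ℝ) : E 3) - 0‖ := by
    apply hωpos
    rw [norm_pos_iff]
    simpa using hne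
  positivity

/-- Taylor estimate -/
lemma taylor (hωmono : MonotoneOn ω (Set.Ici 0))
    (hωpos : ∀ t : ℝ, 0 < t → 0 < ω t) (hω0 : ω 0 = 0)
    (hdiff : ∀ W ∈ Metric.ball (0 : E 3) 1, DifferentiableAt ℝ h W)
    (hb : BddAbove (holSet ω h)) (hH0 : 0 ≤ sSup (holSet ω h))
    (r : ℝ) (hr0 : 0 < r) (hr1 : r < 1/2) (w : E 3) (hw : ‖w‖ < 2) :
    ‖h (r • w) - h 0 - fderiv ℝ h 0 (r • w)‖
      ≤ sSup (holSet ω h) * ω (2*r) * (2*r) := by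
  set H := sSup (holSet ω h)
  set s := Metric.ball (0 : E 3) (2*r)
  have hs1 : s ⊆ Metric.ball (0 : E 3) 1 := Metric.ball_subset_ball (by linarith)
  have hder : ∀ x ∈ s, HasFDerivWithinAt (fun y => h y - fderiv ℝ h 0 y)
      (fderiv ℝ h x - fderiv ℝ h 0) s x := by
    intro x hx
    exact (((hdiff x (hs1 hx)).hasFDerivAt).sub ((fderiv ℝ h 0).hasFDerivAt)).hasFDerivWithinAt
  have hbound : ∀ x ∈ s, ‖fderiv ℝ h x - fderiv ℝ h 0‖ ≤ H * ω (2*r) := by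
    intro x hx
    refine le_trans (hol_le ω h hωpos hω0 hb x (hs1 hx)) ?_
    have hx' : ‖x‖ ≤ 2*r := le_of_lt (by simpa [s, dist_zero_right] using hx)
    exact mul_le_mul_of_nonneg_left
      (hωmono (Set.mem_Ici.2 (norm_nonneg x)) (Set.mem_Ici.2 (by linarith)) hx') hH0
  have h0s : (0 : E 3) ∈ s := by simp [s]; linarith
  have hys : r • w ∈ s := by
    simp only [s, Metric.mem_ball, dist_zero_right, norm_smul, Real.norm_eq_abs,
      abs_of_pos hr0]
    calc r * ‖w‖ < r * 2 := by nlinarith [norm_nonneg w]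
      _ = 2*r := by ring
  have := (convex_ball (0 : E 3) (2*r)).norm_image_sub_le_of_norm_hasFDerivWithin_le
    hder hbound h0s hys
  have hnorm : ‖r • w - (0: E 3)‖ ≤ 2*r := by
    simp only [sub_zero, norm_smul, Real.norm_eq_abs, abs_of_pos hr0]
    nlinarith [norm_nonneg w]
  calc ‖h (r • w) - h 0 - fderiv ℝ h 0 (r • w)‖
      = ‖(fun y => h y - fderiv ℝ h 0 y) (r • w) - (fun y => h y - fderiv ℝ h 0 y) 0‖ := by
        simp only [map_zero]
        congr 1
        abel
    _ ≤ H * ω (2*r) * ‖r • w - (0 : E 3)‖ := this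
    _ ≤ H * ω (2*r) * (2*r) := by
        apply mul_le_mul_of_nonneg_left hnorm
        have : 0 ≤ ω (2*r) := le_of_lt (hωpos _ (by linarith))
        positivity

end perh

lemma Rbound (a b e c1 c2 c3 : ℝ) (ha : |a| ≤ c1) (hb : |b| ≤ c2) (he : |e| ≤ c3) :
    |2*a*b + 2*a*e + 2*b*e + e^2| ≤ 2*c1*c2 + 2*c1*c3 + 2*c2*c3 + c3^2 := by
  have h1 : |2*a*b + 2*a*e + 2*b*e + e^2| ≤ |2*a*b| + |2*a*e| + |2*b*e| + |e^2| := by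
    calc |2*a*b + 2*a*e + 2*b*e + e^2| ≤ |2*a*b + 2*a*e + 2*b*e| + |e^2| := abs_add_le _ _
      _ ≤ |2*a*b + 2*a*e| + |2*b*e| + |e^2| := add_le_add_left (abs_add_le _ _) _
      _ ≤ |2*a*b| + |2*a*e| + |2*b*e| + |e^2| := by
          have := abs_add_le (2*a*b) (2*a*e)
          linarith
  have ha0 := abs_nonneg a
  have hb0 := abs_nonneg b
  have he0 := abs_nonneg e
  have e1 : |2*a*b| = 2 * (|a| * |b|) := by
    rw [abs_mul, abs_mul, abs_two]; ring
  have e2 : |2*a*e| = 2 * (|a| * |e|) := by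
    rw [abs_mul, abs_mul, abs_two]; ring
  have e3 : |2*b*e| = 2 * (|b| * |e|) := by
    rw [abs_mul, abs_mul, abs_two]; ring
  have e4 : |e^2| = |e| * |e| := by
    rw [abs_of_nonneg (sq_nonneg e), ← sq_abs]; ring
  have p1 : |a| * |b| ≤ c1*c2 := mul_le_mul ha hb hb0 (ha0.trans ha)
  have p2 : |a| * |e| ≤ c1*c3 := mul_le_mul ha he he0 (ha0.trans ha)
  have p3 : |b| * |e| ≤ c2*c3 := mul_le_mul hb he he0 (hb0.trans hb)
  have p4 : |e| * |e| ≤ c3*c3 := mul_le_mul he he he0 (he0.trans he)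
  rw [e1, e2, e3, e4] at h1
  have hc3 : c3^2 = c3*c3 := sq c3
  linarith

/-! ### main estimate -/

set_option maxHeartbeats 1000000 in
lemma main_est (l : ℝ) (hl0 : 0 < l) (hl1 : l < 2 / 81)
    (ω : ℝ → ℝ) (hωmono : MonotoneOn ω (Set.Ici 0))
    (hω0 : ω 0 = 0) (hωpos : ∀ t : ℝ, 0 < t → 0 < ω t)
    (ν : ℕ) (τ : ℝ) (hτ0 : 0 < τ)
    (g : Fin ν → E 3 → (Fin 3 → ℝ))
    (hdiff : ∀ (j : Fin ν), ∀ W ∈ Metric.ball (0 : E 3) 1, DifferentiableAt ℝ (g j) W)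
    (hbdd : ∀ j : Fin ν, BddAbove (supSet (g j)) ∧ BddAbove (derSet (g j)) ∧
          BddAbove (holSet ω (g j)))
    (hdecomp : ∀ W ∈ Metric.ball (0 : E 3) 1,
          QlamV l W + τ • (1 : Matrix (Fin 3) (Fin 3) ℝ) =
            ∑ j, vecMulVec (g j W) (g j W))
    (r : ℝ) (hr0 : 0 < r) (hr12 : r < 1/2) (hωr1 : ω (2*r) ≤ 1) :
    min (r / (6336 * Real.sqrt τ)) ((Real.sqrt (14256 * ω (2*r)))⁻¹)
      ≤ ∑ j, c1ωNorm ω (g j) := by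
  classical
  set A := ∑ j, c1ωNorm ω (g j) with hA
  set AJ : Fin ν → ℝ := fun j => c1ωNorm ω (g j) with hAJ
  have hω2r : 0 < ω (2*r) := hωpos _ (by linarith)
  have hτ0' : (0:ℝ) ≤ τ := hτ0.le
  have hsqτ : 0 < Real.sqrt τ := Real.sqrt_pos.2 hτ0
  -- per-j basics
  have hS0 : ∀ j, 0 ≤ sSup (supSet (g j)) := fun j => sup_nonneg' (g j) (hbdd j).1
  have hD0 : ∀ j, 0 ≤ sSup (derSet (g j)) := fun j => der_nonneg' (g j) (hbdd j).2.1
  have hH0 : ∀ j, 0 ≤ sSup (holSet ω (g j)) := fun j => hol_nonneg' ω (g j) hωpos (hbdd j).2.2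
  have hAJdef : ∀ j, AJ j = sSup (supSet (g j)) + sSup (derSet (g j)) + sSup (holSet ω (g j)) :=
    fun j => rfl
  have hAJ0 : ∀ j, 0 ≤ AJ j := by
    intro j; rw [hAJdef j]
    have := hS0 j; have := hD0 j; have := hH0 j; linarith
  have hDA : ∀ j, sSup (derSet (g j)) ≤ AJ j := by
    intro j; rw [hAJdef j]; have := hS0 j; have := hH0 j; linarith
  have hHA : ∀ j, sSup (holSet ω (g j)) ≤ AJ j := by
    intro j; rw [hAJdef j]; have := hS0 j; have := hD0 j; linarith
  have hA0 : 0 ≤ A := Finset.sum_nonneg (fun j _ => hAJ0 j)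
  have hAJA : ∀ j, AJ j ≤ A := fun j =>
    Finset.single_le_sum (fun i (_ : i ∈ Finset.univ) => hAJ0 i) (Finset.mem_univ j)
  have hsumAJ : ∑ j, AJ j = A := rfl
  have hsumAJsq : ∑ j, (AJ j)^2 ≤ A^2 := by
    calc ∑ j, (AJ j)^2 ≤ ∑ j, (AJ j)*A := by
          refine Finset.sum_le_sum (fun j _ => ?_)
          rw [sq]
          exact mul_le_mul_of_nonneg_left (hAJA j) (hAJ0 j)
      _ = A*A := by rw [← Finset.sum_mul, hsumAJ]
      _ = A^2 := (sq A).symm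
  -- membership facts
  have hmem0 : (0 : E 3) ∈ Metric.ball (0 : E 3) 1 := by simp
  have hmem : ∀ k : Fin 15, r • toE (Wpt k) ∈ Metric.ball (0 : E 3) 1 := by
    intro k
    rw [Metric.mem_ball, dist_zero_right, norm_smul, Real.norm_eq_abs, abs_of_pos hr0]
    have := norm_toE_lt k
    nlinarith [norm_nonneg (toE (Wpt k))]
  -- the two decomposition identities
  have hk1 : ∀ k : Fin 15,
      vpt k ⬝ᵥ ((Qlam l (r*Wpt k 0) (r*Wpt k 1) (r*Wpt k 2)
        + τ • (1:Matrix (Fin 3) (Fin 3) ℝ)).mulVec (vpt k))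
      = ∑ j, (vpt k ⬝ᵥ g j (r • toE (Wpt k)))^2 := by
    intro k
    have hd := hdecomp (r • toE (Wpt k)) (hmem k)
    have hQ : QlamV l (r • toE (Wpt k)) = Qlam l (r*Wpt k 0) (r*Wpt k 1) (r*Wpt k 2) := by
      simp [QlamV, PiLp.smul_apply, toE_apply, smul_eq_mul]
    rw [← hQ, hd, sumsq]
  have hk0 : ∀ k : Fin 15, τ * ((vpt k 0)^2 + (vpt k 1)^2 + (vpt k 2)^2)
      = ∑ j, (vpt k ⬝ᵥ g j 0)^2 := by
    intro k
    have hd := hdecomp 0 hmem0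
    have hQ : QlamV l (0 : E 3) = Qlam l 0 0 0 := by simp [QlamV]
    calc τ * ((vpt k 0)^2 + (vpt k 1)^2 + (vpt k 2)^2)
        = vpt k ⬝ᵥ ((Qlam l 0 0 0 + τ • (1:Matrix (Fin 3) (Fin 3) ℝ)).mulVec (vpt k)) :=
          (q0 (vpt k) l τ).symm
      _ = vpt k ⬝ᵥ ((QlamV l 0 + τ • (1:Matrix (Fin 3) (Fin 3) ℝ)).mulVec (vpt k)) := by
          rw [hQ]
      _ = ∑ j, (vpt k ⬝ᵥ g j 0)^2 := by rw [hd, sumsq]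
  -- alpha beta epsilon
  set al : Fin ν → Fin 15 → ℝ := fun j k => vpt k ⬝ᵥ g j 0 with hal
  set be : Fin ν → Fin 15 → ℝ := fun j k => vpt k ⬝ᵥ (fderiv ℝ (g j) 0 (toE (Wpt k))) with hbe
  set ep : Fin ν → Fin 15 → ℝ :=
    fun j k => vpt k ⬝ᵥ g j (r • toE (Wpt k)) - al j k - r * be j k with hep
  have hsplitjk : ∀ (j : Fin ν) (k : Fin 15),
      vpt k ⬝ᵥ g j (r • toE (Wpt k)) = al j k + r * be j k + ep j k := by
    intro j k; rw [hep]; ring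
  -- bounds
  have f1 : ∀ (j : Fin ν) (k : Fin 15), |al j k| ≤ 2*Real.sqrt τ := by
    intro j k
    have hsq : (al j k)^2 ≤ 4*τ := by
      have h1 : (al j k)^2 ≤ ∑ j', (al j' k)^2 :=
        Finset.single_le_sum (fun i (_ : i ∈ Finset.univ) => sq_nonneg (al i k))
          (Finset.mem_univ j)
      have h2 := (hk0 k).symm
      nlinarith [vpt_sq k]
    calc |al j k| = Real.sqrt ((al j k)^2) := (Real.sqrt_sq_eq_abs _).symm
      _ ≤ Real.sqrt (4*τ) := Real.sqrt_le_sqrt hsq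
      _ = 2*Real.sqrt τ := by
          rw [show (4:ℝ)*τ = 2^2*τ by norm_num, Real.sqrt_mul (by positivity) τ,
            Real.sqrt_sq (by norm_num)]
  have f2 : ∀ (j : Fin ν) (k : Fin 15), |be j k| ≤ 6 * AJ j := by
    intro j k
    calc |be j k| ≤ 3 * ‖fderiv ℝ (g j) 0 (toE (Wpt k))‖ :=
          dot_le _ _ (fun i => vpt_abs k i)
      _ ≤ 3 * (‖fderiv ℝ (g j) 0‖ * ‖toE (Wpt k)‖) := by
          have := (fderiv ℝ (g j) 0).le_opNorm (toE (Wpt k))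
          linarith
      _ ≤ 6 * AJ j := by
          have h1 := norm_toE_lt k
          have h2 := der0_le (g j) (hbdd j).2.1
          have h3 := hDA j
          nlinarith [norm_nonneg (fderiv ℝ (g j) 0), norm_nonneg (toE (Wpt k)), hD0 j]
  have f3 : ∀ (j : Fin ν) (k : Fin 15), |ep j k| ≤ 6 * AJ j * (r * ω (2*r)) := by
    intro j k
    have heq : ep j k = vpt k ⬝ᵥ
        (g j (r • toE (Wpt k)) - g j 0 - fderiv ℝ (g j) 0 (r • toE (Wpt k))) := by
      rw [hep, dotProduct_sub, dotProduct_sub]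
      rw [(fderiv ℝ (g j) 0).map_smul, dotProduct_smul]
      simp only [hal, hbe, smul_eq_mul]
    rw [heq]
    calc |vpt k ⬝ᵥ (g j (r • toE (Wpt k)) - g j 0 - fderiv ℝ (g j) 0 (r • toE (Wpt k)))|
        ≤ 3 * ‖g j (r • toE (Wpt k)) - g j 0 - fderiv ℝ (g j) 0 (r • toE (Wpt k))‖ :=
          dot_le _ _ (fun i => vpt_abs k i)
      _ ≤ 3 * (sSup (holSet ω (g j)) * ω (2*r) * (2*r)) := by
          have := taylor ω (g j) hωmono hωpos hω0 (hdiff j) (hbdd j).2.2 (hH0 j)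
            r hr0 hr12 (toE (Wpt k)) (norm_toE_lt k)
          linarith
      _ ≤ 6 * AJ j * (r * ω (2*r)) := by
          nlinarith [mul_nonneg (mul_nonneg (sub_nonneg.2 (hHA j)) hr0.le) hω2r.le]
  -- splitting
  have hsplitk : ∀ k : Fin 15, ∑ j, (vpt k ⬝ᵥ g j (r • toE (Wpt k)))^2
      = (∑ j, (al j k)^2) + r^2 * (∑ j, (be j k)^2)
        + ∑ j, (2*(al j k)*(r*be j k) + 2*(al j k)*(ep j k)
            + 2*(r*be j k)*(ep j k) + (ep j k)^2) := by
    intro k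
    rw [Finset.mul_sum, ← Finset.sum_add_distrib, ← Finset.sum_add_distrib]
    refine Finset.sum_congr rfl (fun j _ => ?_)
    rw [hsplitjk j k]; ring
  set Rk : Fin 15 → ℝ := fun k => ∑ j, (2*(al j k)*(r*be j k) + 2*(al j k)*(ep j k)
            + 2*(r*be j k)*(ep j k) + (ep j k)^2) with hRk
  -- global identities
  have hG1 : ∑ k, cc k * (∑ j, (vpt k ⬝ᵥ g j (r • toE (Wpt k)))^2) = (48*l - 3)*r^2 + 42*τ := by
    rw [← cert2 l τ r]
    exact Finset.sum_congr rfl (fun k _ => by rw [hk1 k])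
  have hG2a : ∑ k, cc k * (∑ j, (al j k)^2) = 42*τ := by
    calc ∑ k, cc k * (∑ j, (al j k)^2)
        = ∑ k, τ * (cc k * ((vpt k 0)^2 + (vpt k 1)^2 + (vpt k 2)^2)) := by
          refine Finset.sum_congr rfl (fun k _ => ?_)
          rw [← hk0 k]; ring
      _ = τ * ∑ k, cc k * ((vpt k 0)^2 + (vpt k 1)^2 + (vpt k 2)^2) := by
          rw [Finset.mul_sum]
      _ = 42*τ := by rw [cert3]; ring
  have hG3 : 0 ≤ ∑ k, cc k * (∑ j, (be j k)^2) := by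
    have hswap : ∑ k, cc k * (∑ j, (be j k)^2) = ∑ j, ∑ k, cc k * (be j k)^2 := by
      simp only [Finset.mul_sum]
      exact Finset.sum_comm
    rw [hswap]
    refine Finset.sum_nonneg (fun j _ => ?_)
    have hbeq : ∀ k, be j k
        = ∑ j', vpt k j' * (∑ i, (fun a b => fderiv ℝ (g j) 0 (bE b) a) j' i * Wpt k i) := by
      intro k
      simp only [hbe]
      show vpt k ⬝ᵥ (fderiv ℝ (g j) 0 (toE (Wpt k))) = _
      rw [dotProduct]
      refine Finset.sum_congr rfl (fun j' _ => ?_)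
      rw [clm_apply]
      congr 1
      exact Finset.sum_congr rfl (fun i _ => by ring)
    have := cert1 (fun a b => fderiv ℝ (g j) 0 (bE b) a)
    calc (0:ℝ) ≤ ∑ k, cc k * (∑ j', vpt k j' *
          (∑ i, (fun a b => fderiv ℝ (g j) 0 (bE b) a) j' i * Wpt k i))^2 := this
      _ = ∑ k, cc k * (be j k)^2 := by
          refine Finset.sum_congr rfl (fun k _ => ?_)
          rw [hbeq k]
  -- remainder bound
  set ρ : ℝ := 48*Real.sqrt τ*A*r + 108*A^2*(r^2*ω (2*r)) with hρ
  have hRkb : ∀ k, |Rk k| ≤ ρ := by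
    intro k
    have hterm : ∀ j : Fin ν, |2*(al j k)*(r*be j k) + 2*(al j k)*(ep j k)
        + 2*(r*be j k)*(ep j k) + (ep j k)^2|
        ≤ 48*Real.sqrt τ*(AJ j)*r + 108*(AJ j)^2*(r^2*ω (2*r)) := by
      intro j
      have hb' : |r * be j k| ≤ 6*(AJ j)*r := by
        rw [abs_mul, abs_of_pos hr0]
        have := f2 j k
        nlinarith [abs_nonneg (be j k)]
      have := Rbound (al j k) (r * be j k) (ep j k)
        (2*Real.sqrt τ) (6*(AJ j)*r) (6 * AJ j * (r * ω (2*r)))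
        (f1 j k) hb' (f3 j k)
      have hAJ0' := hAJ0 j
      nlinarith [mul_nonneg (mul_nonneg hsqτ.le hAJ0') hr0.le,
        mul_nonneg (mul_nonneg (sq_nonneg (AJ j)) (sq_nonneg r)) hω2r.le,
        sq_nonneg (AJ j), sq_nonneg r, hω2r.le, hωr1, hr0.le]
    calc |Rk k| ≤ ∑ j, |2*(al j k)*(r*be j k) + 2*(al j k)*(ep j k)
            + 2*(r*be j k)*(ep j k) + (ep j k)^2| := by
          simp only [hRk]; exact Finset.abs_sum_le_sum_abs _ _
      _ ≤ ∑ j, (48*Real.sqrt τ*(AJ j)*r + 108*(AJ j)^2*(r^2*ω (2*r))) :=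
          Finset.sum_le_sum (fun j _ => hterm j)
      _ = 48*Real.sqrt τ*r*(∑ j, AJ j) + 108*(r^2*ω (2*r))*(∑ j, (AJ j)^2) := by
          rw [Finset.sum_add_distrib, Finset.mul_sum, Finset.mul_sum]
          congr 1
          · exact Finset.sum_congr rfl (fun j _ => by ring)
          · exact Finset.sum_congr rfl (fun j _ => by ring)
      _ ≤ ρ := by
          rw [hsumAJ, hρ]
          have h1 : 108*(r^2*ω (2*r))*(∑ j, (AJ j)^2) ≤ 108*(r^2*ω (2*r))*A^2 := by
            apply mul_le_mul_of_nonneg_left hsumAJsq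
            positivity
          nlinarith [h1]
  have hρ0 : 0 ≤ ρ := by rw [hρ]; positivity
  have hG4 : |∑ k, cc k * Rk k| ≤ 66 * ρ := by
    calc |∑ k, cc k * Rk k| ≤ ∑ k, |cc k * Rk k| := Finset.abs_sum_le_sum_abs _ _
      _ = ∑ k, |cc k| * |Rk k| := by
          refine Finset.sum_congr rfl (fun k _ => abs_mul _ _)
      _ ≤ ∑ k, |cc k| * ρ := Finset.sum_le_sum
          (fun k _ => mul_le_mul_of_nonneg_left (hRkb k) (abs_nonneg _))
      _ = (∑ k, |cc k|) * ρ := by rw [Finset.sum_mul]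
      _ = 66 * ρ := by rw [cert4]
  -- combine
  have hexp : ∑ k, cc k * (∑ j, (vpt k ⬝ᵥ g j (r • toE (Wpt k)))^2)
      = (∑ k, cc k * (∑ j, (al j k)^2)) + r^2 * (∑ k, cc k * (∑ j, (be j k)^2))
        + ∑ k, cc k * Rk k := by
    calc ∑ k, cc k * (∑ j, (vpt k ⬝ᵥ g j (r • toE (Wpt k)))^2)
        = ∑ k, (cc k * (∑ j, (al j k)^2) + r^2 * (cc k * (∑ j, (be j k)^2))
            + cc k * Rk k) := by
          refine Finset.sum_congr rfl (fun k _ => ?_)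
          rw [hsplitk k]; simp only [hRk]; ring
      _ = _ := by
          rw [Finset.sum_add_distrib, Finset.sum_add_distrib, ← Finset.mul_sum]
  have hfinal : r^2 ≤ 66 * ρ := by
    have heq : (48*l - 3)*r^2 + 42*τ
        = 42*τ + r^2 * (∑ k, cc k * (∑ j, (be j k)^2)) + ∑ k, cc k * Rk k := by
      linarith [hexp, hG1, hG2a]
    have hl' : 48*l - 3 ≤ -1 := by linarith
    have hRlow : -(66*ρ) ≤ ∑ k, cc k * Rk k := neg_le_of_abs_le hG4
    nlinarith [hG3, sq_nonneg r, mul_nonneg (sq_nonneg r) hG3,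
      mul_nonneg (sq_nonneg r) (by linarith : (0:ℝ) ≤ -1 - (48*l-3))]
  -- case split
  have hfinal' : r^2 ≤ 66*(48*Real.sqrt τ*A*r) + 66*(108*A^2*(r^2*ω (2*r))) := by
    rw [hρ] at hfinal; linarith
  by_cases hcase : r^2/2 ≤ 66*(48*Real.sqrt τ*A*r)
  · refine le_trans (min_le_left _ _) ?_
    rw [div_le_iff₀ (by positivity)]
    nlinarith [hsqτ, hr0]
  · push_neg at hcase
    have h2 : r^2/2 ≤ 66*(108*A^2*(r^2*ω (2*r))) := by linarith
    have h3 : 1 ≤ 14256*ω (2*r)*A^2 := by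
      have hr2 : 0 < r^2 := by positivity
      nlinarith
    refine le_trans (min_le_right _ _) ?_
    have hX : (0:ℝ) < 14256*ω (2*r) := by positivity
    have hs : 0 < Real.sqrt (14256*ω (2*r)) := Real.sqrt_pos.2 hX
    have hss : (Real.sqrt (14256*ω (2*r)))^2 = 14256*ω (2*r) := Real.sq_sqrt hX.le
    have hAs : 1 ≤ (A * Real.sqrt (14256*ω (2*r)))^2 := by
      have : (A * Real.sqrt (14256*ω (2*r)))^2 = 14256*ω (2*r)*A^2 := by
        rw [mul_pow, hss]; ring
      rw [this]; exact h3
    have h1As : 1 ≤ A * Real.sqrt (14256*ω (2*r)) := by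
      nlinarith [mul_nonneg hA0 hs.le]
    rw [inv_eq_one_div, div_le_iff₀ hs]
    linarith

set_option maxHeartbeats 1000000 in
theorem stmt_15 (l : ℝ) (hl0 : 0 < l) (hl1 : l < 2 / 81)
    (ω : ℝ → ℝ) (hωcont : ContinuousOn ω (Set.Ici 0)) (hωmono : MonotoneOn ω (Set.Ici 0))
    (hω0 : ω 0 = 0) (hωpos : ∀ t : ℝ, 0 < t → 0 < ω t)
    (ν : ℕ) (hν : 0 < ν) :
    ∃ 𝒞 : ℝ → ℝ, AntitoneOn 𝒞 (Set.Ioo 0 1) ∧ (∀ τ ∈ Set.Ioo (0 : ℝ) 1, 0 < 𝒞 τ) ∧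
      Tendsto 𝒞 (nhdsWithin 0 (Set.Ioi 0)) atTop ∧
      ∀ τ ∈ Set.Ioo (0 : ℝ) 1, ∀ g : Fin ν → E 3 → (Fin 3 → ℝ),
        (∀ (j : Fin ν), ∀ W ∈ Metric.ball (0 : E 3) 1, DifferentiableAt ℝ (g j) W) →
        (∀ j : Fin ν, BddAbove (supSet (g j)) ∧ BddAbove (derSet (g j)) ∧
          BddAbove (holSet ω (g j))) →
        (∀ W ∈ Metric.ball (0 : E 3) 1,
          QlamV l W + τ • (1 : Matrix (Fin 3) (Fin 3) ℝ) =
            ∑ j, vecMulVec (g j W) (g j W)) →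
        𝒞 τ ≤ ∑ j, c1ωNorm ω (g j) := by
  classical
  -- small r with small ω(2r)
  have hsmall : ∀ ε : ℝ, 0 < ε → ∃ r : ℝ, 0 < r ∧ r < 1/2 ∧ ω (2*r) ≤ ε := by
    intro ε hε
    have hcw : ContinuousWithinAt ω (Set.Ici 0) 0 := hωcont 0 Set.self_mem_Ici
    have ht : Tendsto ω (nhdsWithin 0 (Set.Ici 0)) (nhds 0) := by
      have : ContinuousWithinAt ω (Set.Ici 0) 0 := hcw
      rw [ContinuousWithinAt, hω0] at this
      exact this
    have hev : ω ⁻¹' (Set.Iio ε) ∈ nhdsWithin 0 (Set.Ici 0) := ht (Iio_mem_nhds hε)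
    rw [Metric.mem_nhdsWithin_iff] at hev
    obtain ⟨δ, hδ, hsub⟩ := hev
    refine ⟨min (δ/4) (1/4), by positivity, ?_, ?_⟩
    · calc min (δ/4) (1/4) ≤ 1/4 := min_le_right _ _
        _ < 1/2 := by norm_num
    · have h0 : 0 < min (δ/4) (1/4) := by positivity
      have h2r : 2 * min (δ/4) (1/4) ∈ Metric.ball (0:ℝ) δ ∩ Set.Ici 0 := by
        constructor
        · rw [Metric.mem_ball, dist_zero_right, Real.norm_eq_abs]
          have h1 : min (δ/4) (1/4) ≤ δ/4 := min_le_left _ _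
          rw [abs_of_pos (by linarith)]
          linarith
        · exact Set.mem_Ici.2 (by positivity)
      exact le_of_lt (hsub h2r)
  set T : Set ℝ := {r : ℝ | 0 < r ∧ r < 1/2 ∧ ω (2*r) ≤ 1} with hT
  obtain ⟨r₀, hr₀0, hr₀12, hr₀1⟩ := hsmall 1 one_pos
  have hTne : T.Nonempty := ⟨r₀, hr₀0, hr₀12, hr₀1⟩
  set φ : ℝ → ℝ → ℝ :=
    fun r τ => min (r / (6336 * Real.sqrt τ)) ((Real.sqrt (14256 * ω (2*r)))⁻¹) with hφ
  have himg_ne : ∀ τ : ℝ, ((fun r => φ r τ) '' T).Nonempty := fun τ => hTne.image _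
  have hbddA : ∀ τ : ℝ, 0 < τ → BddAbove ((fun r => φ r τ) '' T) := by
    intro τ hτ
    refine ⟨(1/2) / (6336 * Real.sqrt τ), ?_⟩
    rintro y ⟨r, hrT, rfl⟩
    have h1 : 0 < 6336 * Real.sqrt τ := by
      have := Real.sqrt_pos.2 hτ; positivity
    calc φ r τ ≤ r / (6336*Real.sqrt τ) := min_le_left _ _
      _ ≤ (1/2) / (6336*Real.sqrt τ) := by
          exact div_le_div_of_nonneg_right hrT.2.1.le h1.le
  have hφpos : ∀ τ : ℝ, 0 < τ → ∀ r ∈ T, 0 < φ r τ := by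
    intro τ hτ r hrT
    obtain ⟨hr0, hr12, hω1⟩ := hrT
    have hsq := Real.sqrt_pos.2 hτ
    have hω2 : 0 < ω (2*r) := hωpos _ (by linarith)
    apply lt_min
    · positivity
    · have : 0 < Real.sqrt (14256 * ω (2*r)) := Real.sqrt_pos.2 (by positivity)
      positivity
  set C : ℝ → ℝ := fun τ => sSup ((fun r => φ r τ) '' T) with hC
  refine ⟨C, ?_, ?_, ?_, ?_⟩
  · -- Antitone
    intro τ₁ hτ₁ τ₂ hτ₂ h12
    apply csSup_le (himg_ne τ₂)
    rintro y ⟨r, hrT, rfl⟩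
    refine le_trans ?_ (le_csSup (hbddA τ₁ hτ₁.1) ⟨r, hrT, rfl⟩)
    show φ r τ₂ ≤ φ r τ₁
    apply min_le_min ?_ le_rfl
    have h1 : 0 < Real.sqrt τ₁ := Real.sqrt_pos.2 hτ₁.1
    have h2 : Real.sqrt τ₁ ≤ Real.sqrt τ₂ := Real.sqrt_le_sqrt h12
    exact div_le_div_of_nonneg_left hrT.1.le (by nlinarith) (by nlinarith)
  · -- positivity
    intro τ hτ
    exact lt_of_lt_of_le (hφpos τ hτ.1 r₀ ⟨hr₀0, hr₀12, hr₀1⟩)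
      (le_csSup (hbddA τ hτ.1) ⟨r₀, ⟨hr₀0, hr₀12, hr₀1⟩, rfl⟩)
  · -- tendsto
    rw [tendsto_atTop]
    intro M
    set M' : ℝ := max M 1 with hM'
    have hM'0 : 0 < M' := lt_of_lt_of_le one_pos (le_max_right _ _)
    obtain ⟨r₁, hr₁0, hr₁12, hr₁⟩ := hsmall (min 1 (1/(14256*M'^2))) (by positivity)
    have hr₁T : r₁ ∈ T := ⟨hr₁0, hr₁12, hr₁.trans (min_le_left _ _)⟩
    have hω2 : 0 < ω (2*r₁) := hωpos _ (by linarith)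
    have hterm2 : M' ≤ (Real.sqrt (14256 * ω (2*r₁)))⁻¹ := by
      have hle : ω (2*r₁) ≤ 1/(14256*M'^2) := hr₁.trans (min_le_right _ _)
      have h1 : 14256 * ω (2*r₁) ≤ (1/M')^2 := by
        rw [div_pow, one_pow]
        rw [le_div_iff₀ (by positivity)]
        calc 14256 * ω (2*r₁) * M'^2 ≤ 14256 * (1/(14256*M'^2)) * M'^2 := by
              nlinarith [sq_nonneg M']
          _ = 1 := by field_simp
      have h2 : Real.sqrt (14256 * ω (2*r₁)) ≤ 1/M' := by
        calc Real.sqrt (14256 * ω (2*r₁)) ≤ Real.sqrt ((1/M')^2) := Real.sqrt_le_sqrt h1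
          _ = 1/M' := Real.sqrt_sq (by positivity)
      have h3 : 0 < Real.sqrt (14256 * ω (2*r₁)) := Real.sqrt_pos.2 (by positivity)
      have h4 := one_div_le_one_div_of_le h3 h2
      rw [one_div_one_div] at h4
      rw [inv_eq_one_div]
      exact h4
    have hev : Set.Ioo (0:ℝ) (min 1 ((r₁/(6336*M'))^2)) ∈ nhdsWithin 0 (Set.Ioi 0) := by
      apply Ioo_mem_nhdsGT_of_mem
      constructor
      · exact le_refl 0
      · have : 0 < r₁/(6336*M') := by positivity
        positivity
    filter_upwards [hev] with τ hτ
    obtain ⟨hτ0, hτlt⟩ := hτ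
    have hτ1 : τ < (r₁/(6336*M'))^2 := lt_of_lt_of_le hτlt (min_le_right _ _)
    have hterm1 : M' ≤ r₁ / (6336 * Real.sqrt τ) := by
      have hsq : 0 < Real.sqrt τ := Real.sqrt_pos.2 hτ0
      rw [le_div_iff₀ (by positivity)]
      have h1 : Real.sqrt τ < r₁/(6336*M') := by
        calc Real.sqrt τ < Real.sqrt ((r₁/(6336*M'))^2) := Real.sqrt_lt_sqrt hτ0.le hτ1
          _ = r₁/(6336*M') := Real.sqrt_sq (by positivity)
      calc M' * (6336 * Real.sqrt τ) ≤ M' * (6336 * (r₁/(6336*M'))) := by nlinarith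
        _ = r₁ := by field_simp
    have hφM : M' ≤ φ r₁ τ := le_min hterm1 hterm2
    calc M ≤ M' := le_max_left _ _
      _ ≤ φ r₁ τ := hφM
      _ ≤ C τ := le_csSup (hbddA τ hτ0) ⟨r₁, hr₁T, rfl⟩
  · -- the main inequality
    intro τ hτ g hdiff hbdd hdecomp
    apply csSup_le (himg_ne τ)
    rintro y ⟨r, hrT, rfl⟩
    exact main_est l hl0 hl1 ω hωmono hω0 hωpos ν τ hτ.1 g hdiff hbdd hdecomp
      r hrT.1 hrT.2.1 hrT.2.2
end
end

section
/- Let 0 < |γ| < 1, ρ > 0, and let f : ℝ → [0, ∞) be continuously differentiable with f(0) = 0 and f(x) > 0 for all 0 < |x| < ρ. Define the symmetric 2×2 matrix-valued function A(x) = [[1, γf(x)], [γf(x), f(x)²]]. Then A is not subordinate on any neighborhood of 0: for every Γ > 0 and every 0 < ρ' ≤ ρ there exist x with 0 < |x| < ρ' and ξ ∈ ℝ² such that |A′(x)ξ|² > Γ²·ξᵀA(x)ξ. -/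
open Matrix

theorem stmt_17 (γ ρ : ℝ) (hγ0 : 0 < |γ|) (hγ1 : |γ| < 1) (hρ : 0 < ρ)
    (f : ℝ → ℝ) (hf : ContDiff ℝ 1 f) (hf0 : f 0 = 0) (hfnn : ∀ x, 0 ≤ f x)
    (hfpos : ∀ x : ℝ, 0 < |x| → |x| < ρ → 0 < f x) :
    ∀ Γ : ℝ, 0 < Γ → ∀ ρ' : ℝ, 0 < ρ' → ρ' ≤ ρ →
      ∃ x : ℝ, 0 < |x| ∧ |x| < ρ' ∧ ∃ ξ : Fin 2 → ℝ,
        Γ ^ 2 * (ξ ⬝ᵥ (!![1, γ * f x; γ * f x, f x ^ 2]) *ᵥ ξ) <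
          ∑ i, ((Matrix.of fun i j =>
              deriv (fun y => (!![1, γ * f y; γ * f y, f y ^ 2] :
                Matrix (Fin 2) (Fin 2) ℝ) i j) x) *ᵥ ξ) i ^ 2 := by
  intro Γ hΓ ρ' hρ'0 hρ'ρ
  have hfd : Differentiable ℝ f := hf.differentiable one_ne_zero
  set C : ℝ := Γ / |γ| with hC
  -- Step 1: find a point where γ² f'² > Γ² f²
  have key : ∃ x : ℝ, 0 < x ∧ x < ρ' ∧ Γ ^ 2 * f x ^ 2 < γ ^ 2 * (deriv f x) ^ 2 := by
    by_contra hcon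
    push_neg at hcon
    set b : ℝ := ρ' / 2 with hb
    have hb0 : 0 < b := by positivity
    have hbρ' : b < ρ' := by linarith
    set g : ℝ → ℝ := fun y => f y * Real.exp (-C * y) with hg
    have hgderiv : ∀ x : ℝ, HasDerivAt g
        (deriv f x * Real.exp (-C * x) + f x * (Real.exp (-C * x) * (-C))) x := by
      intro x
      exact ((hfd x).hasDerivAt).mul (((hasDerivAt_id x).const_mul (-C)).exp.congr_deriv
        (by simp [id]))
    have hanti : AntitoneOn g (Set.Icc 0 b) := by
      apply antitoneOn_of_deriv_nonpos (convex_Icc 0 b)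
      · exact (Differentiable.continuous (fun x => (hgderiv x).differentiableAt)).continuousOn
      · exact fun x _ => ((hgderiv x).differentiableAt).differentiableWithinAt
      · intro x hx
        rw [interior_Icc] at hx
        rw [(hgderiv x).deriv]
        have h1 : γ ^ 2 * (deriv f x) ^ 2 ≤ Γ ^ 2 * f x ^ 2 := by
          exact hcon x hx.1 (by linarith [hx.2])
        have hfx : 0 ≤ f x := hfnn x
        have h2 : |γ| * deriv f x ≤ Γ * f x := by
          nlinarith [sq_abs γ, mul_nonneg hΓ.le hfx]
        have h3 : deriv f x ≤ C * f x := by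
          rw [hC, div_mul_eq_mul_div, le_div_iff₀ hγ0]
          nlinarith
        have hexp : 0 < Real.exp (-C * x) := Real.exp_pos _
        nlinarith
    have h0 : g 0 = 0 := by simp [hg, hf0]
    have hgb : 0 < g b := by
      apply mul_pos _ (Real.exp_pos _)
      apply hfpos b
      · rwa [abs_of_pos hb0]
      · rw [abs_of_pos hb0]; linarith
    have := hanti (Set.left_mem_Icc.2 hb0.le) (Set.right_mem_Icc.2 hb0.le) hb0.le
    rw [h0] at this
    linarith
  obtain ⟨x, hx0, hxρ', hkey⟩ := key
  refine ⟨x, by rwa [abs_of_pos hx0], by rwa [abs_of_pos hx0], ![0, 1], ?_⟩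
  have hd1 : deriv (fun y => γ * f y) x = γ * deriv f x := by
    rw [deriv_const_mul γ (hfd x)]
  have hd2 : deriv (fun y => f y ^ 2) x = 2 * f x * deriv f x := by
    have := ((hfd x).hasDerivAt.fun_pow 2).deriv
    simpa using this
  simp only [Matrix.mulVec, dotProduct, Fin.sum_univ_two, Matrix.of_apply,
    Matrix.cons_val', Matrix.cons_val_zero, Matrix.cons_val_one, Matrix.head_cons,
    Matrix.empty_val', Matrix.cons_val_fin_one, Matrix.head_fin_const]
  rw [hd1, hd2]
  simp only [deriv_const']
  nlinarith [sq_nonneg (2 * f x * deriv f x), sq_nonneg (f x)]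
end
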